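/- arXiv:2105.09871 — 11 statements merged into one kernel-verified Lean document; each statement's English description precedes it below -/
import Mathlib

section
/- Let G be a graph whose vertex set is partitioned into a clique K and an independent set S with |K| = |S| = k and K complete to S, where k is odd. Then there exists a triangle packing of size binom(k,2) using all edges inside K, such that the edges not used by the packing form a perfect matching between K and S; moreover, this unused matching can be prescribed arbitrarily. -/
open Finset

/-- A triangle in `G`: a 3-element vertex set that is a clique. -/
def IsTriangle {V : Type*} (G : SimpleGraph V) (t : Finset V) : Prop :=
  t.card = 3 ∧ G.IsClique ↑t

/-- A triangle packing: a family of pairwise edge-disjoint triangles. -/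
def IsTrianglePacking {V : Type*} [DecidableEq V] (G : SimpleGraph V)
    (P : Finset (Finset V)) : Prop :=
  (∀ t ∈ P, IsTriangle G t) ∧
    ∀ t₁ ∈ P, ∀ t₂ ∈ P, t₁ ≠ t₂ → (t₁ ∩ t₂).card ≤ 1

/-- A triangle hitting set: a set of edges of `G` meeting every triangle of `G`. -/
def IsTriangleHitting {V : Type*} [Fintype V] [DecidableEq V] (G : SimpleGraph V)
    [DecidableRel G.Adj] (H : Finset (Sym2 V)) : Prop :=
  H ⊆ G.edgeFinset ∧
    ∀ t : Finset V, IsTriangle G t → ∃ e ∈ H, ∀ v ∈ e, v ∈ t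

/-- The minimum size of a triangle hitting set, `τ(G)`. -/
noncomputable def triTau {V : Type*} [Fintype V] [DecidableEq V] (G : SimpleGraph V)
    [DecidableRel G.Adj] : ℕ :=
  sInf {n | ∃ H : Finset (Sym2 V), IsTriangleHitting G H ∧ H.card = n}

/-- The maximum size of a triangle packing, `μ(G)`. -/
noncomputable def triMu {V : Type*} [Fintype V] [DecidableEq V] (G : SimpleGraph V) : ℕ :=
  sSup {n | ∃ P : Finset (Finset V), IsTrianglePacking G P ∧ P.card = n}

/-- A set of edges forming a matching (pairwise vertex-disjoint edges). -/
def IsMatchingSet {V : Type*} (M : Finset (Sym2 V)) : Prop :=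
  ∀ e₁ ∈ M, ∀ e₂ ∈ M, e₁ ≠ e₂ → ∀ v : V, v ∈ e₁ → v ∉ e₂

/-- A threshold representation of a graph `G`: the `c i` form a clique with nested
closed neighbourhoods, the `u j` form an independent set with nested neighbourhoods,
and together they partition the vertex set. -/
structure ThresholdRep {V : Type*} (G : SimpleGraph V) where
  k : ℕ
  s : ℕ
  c : Fin k → V
  u : Fin s → V
  inj_c : Function.Injective c
  inj_u : Function.Injective u
  disj : ∀ i j, c i ≠ u j
  cover : ∀ v : V, (∃ i, v = c i) ∨ (∃ j, v = u j)
  clique : ∀ i j, i ≠ j → G.Adj (c i) (c j)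
  indep : ∀ i j, ¬ G.Adj (u i) (u j)
  nestedK : ∀ (i : Fin k) (h : i.val + 1 < k),
    (insert (c ⟨i.val + 1, h⟩) (G.neighborSet (c ⟨i.val + 1, h⟩)) : Set V) ⊆
      insert (c i) (G.neighborSet (c i))
  nestedS : ∀ (j : Fin s) (h : j.val + 1 < s),
    G.neighborSet (u j) ⊆ G.neighborSet (u ⟨j.val + 1, h⟩)

/-- A co-chain representation of a graph `G`: two cliques `c` and `d` partitioning the
vertex set, with nested closed neighbourhoods along each ordering. -/
structure CoChainRep {V : Type*} (G : SimpleGraph V) where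
  n : ℕ
  m : ℕ
  c : Fin n → V
  d : Fin m → V
  inj_c : Function.Injective c
  inj_d : Function.Injective d
  disj : ∀ i j, c i ≠ d j
  cover : ∀ v : V, (∃ i, v = c i) ∨ (∃ j, v = d j)
  clique1 : ∀ i j, i ≠ j → G.Adj (c i) (c j)
  clique2 : ∀ i j, i ≠ j → G.Adj (d i) (d j)
  nested1 : ∀ (i : Fin n) (h : i.val + 1 < n),
    (insert (c ⟨i.val + 1, h⟩) (G.neighborSet (c ⟨i.val + 1, h⟩)) : Set V) ⊆
      insert (c i) (G.neighborSet (c i))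
  nested2 : ∀ (i : Fin m) (h : i.val + 1 < m),
    (insert (d i) (G.neighborSet (d i)) : Set V) ⊆
      insert (d ⟨i.val + 1, h⟩) (G.neighborSet (d ⟨i.val + 1, h⟩))

private lemma sym2_exists_rep {α : Type*} (z : Sym2 α) : ∃ x y, z = s(x, y) :=
  Sym2.inductionOn z fun x y => ⟨x, y, rfl⟩

/-- In a complete split graph with clique `K` and independent set `S` of equal odd size `k`,
for every prescribed perfect matching `M` between `K` and `S` there is a triangle packing
of size `k choose 2` using all edges inside `K` whose unused edges are exactly `M`. -/
theorem complete_split_packing_odd {V : Type*} [Fintype V] [DecidableEq V]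
    (G : SimpleGraph V) [DecidableRel G.Adj] (K S : Finset V) (k : ℕ) (hodd : Odd k)
    (hdisj : Disjoint K S) (hcover : K ∪ S = Finset.univ)
    (hK : G.IsClique ↑K) (hS : ∀ u ∈ S, ∀ v ∈ S, ¬ G.Adj u v)
    (hcomp : ∀ u ∈ K, ∀ v ∈ S, G.Adj u v)
    (hKcard : K.card = k) (hScard : S.card = k)
    (M : Finset (Sym2 V)) (hME : M ⊆ G.edgeFinset)
    (hMKS : ∀ e ∈ M, ∃ a ∈ K, ∃ b ∈ S, e = s(a, b))
    (hMperf : ∀ v ∈ K ∪ S, ∃! e, e ∈ M ∧ v ∈ e) :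
    ∃ P : Finset (Finset V), IsTrianglePacking G P ∧ P.card = k.choose 2 ∧
      (∀ a ∈ K, ∀ b ∈ K, a ≠ b → ∃ t ∈ P, a ∈ t ∧ b ∈ t) ∧
      (∀ e ∈ G.edgeFinset, (e ∈ M ↔ ¬ ∃ t ∈ P, ∀ v ∈ e, v ∈ t)) := by
  classical
  have hk0 : k ≠ 0 := by rintro rfl; simp at hodd
  haveI : NeZero k := ⟨hk0⟩
  -- enumeration of K
  have hcardK : Fintype.card (ZMod k) = Fintype.card {x // x ∈ K} := by
    rw [ZMod.card, Fintype.card_coe, hKcard]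
  let eK : ZMod k ≃ {x // x ∈ K} := Fintype.equivOfCardEq hcardK
  set a : ZMod k → V := fun i => (eK i : V) with ha_def
  have haK : ∀ i, a i ∈ K := fun i => (eK i).2
  have ha_inj : Function.Injective a := fun i j h => eK.injective (Subtype.ext h)
  have ha_surj : ∀ x ∈ K, ∃ i, a i = x := fun x hx =>
    ⟨eK.symm ⟨x, hx⟩, by simp [ha_def]⟩
  -- matching partner function b
  have hb' : ∀ i : ZMod k, ∃ y, y ∈ S ∧ s(a i, y) ∈ M := by
    intro i
    obtain ⟨e, ⟨heM, hie⟩, -⟩ := hMperf (a i) (Finset.mem_union_left _ (haK i))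
    obtain ⟨x, hxK, y, hyS, rfl⟩ := hMKS e heM
    rcases Sym2.mem_iff.mp hie with h | h
    · exact ⟨y, hyS, by rw [h]; exact heM⟩
    · have : a i ∈ S := by rw [h]; exact hyS
      exact absurd this (Finset.disjoint_left.mp hdisj (haK i))
  choose b hbS hbM using hb'
  have hab : ∀ i m, a i ≠ b m := by
    intro i m h
    have : a i ∈ S := by rw [h]; exact hbS m
    exact Finset.disjoint_left.mp hdisj (haK i) this
  have hM_eq : ∀ e ∈ M, ∃ i, e = s(a i, b i) := by
    intro e heM
    obtain ⟨x, hxK, y, hyS, rfl⟩ := hMKS e heM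
    obtain ⟨i, rfl⟩ := ha_surj x hxK
    obtain ⟨eu, -, hu⟩ := hMperf (a i) (Finset.mem_union_left _ (haK i))
    have h1 := hu _ ⟨heM, Sym2.mem_mk_left _ _⟩
    have h2 := hu _ ⟨hbM i, Sym2.mem_mk_left _ _⟩
    exact ⟨i, h1.trans h2.symm⟩
  have hb_inj : Function.Injective b := by
    intro i j hij
    obtain ⟨eu, -, hu⟩ := hMperf (b i) (Finset.mem_union_right _ (hbS i))
    have h1 := hu _ ⟨hbM i, Sym2.mem_mk_right _ _⟩
    have h2 := hu _ ⟨hbM j, by rw [hij]; exact Sym2.mem_mk_right _ _⟩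
    have h3 : s(a i, b i) = s(a j, b j) := h1.trans h2.symm
    rw [Sym2.eq_iff] at h3
    rcases h3 with ⟨h, -⟩ | ⟨h, -⟩
    · exact ha_inj h
    · exact absurd h (hab i j)
  have hb_surj : ∀ y ∈ S, ∃ m, b m = y := by
    have himg : (Finset.univ.image b) = S := by
      apply Finset.eq_of_subset_of_card_le
      · intro y hy
        obtain ⟨m, -, rfl⟩ := Finset.mem_image.mp hy
        exact hbS m
      · rw [Finset.card_image_of_injective _ hb_inj, Finset.card_univ, ZMod.card]
        exact hScard.le
    intro y hy
    rw [← himg] at hy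
    obtain ⟨m, -, hm⟩ := Finset.mem_image.mp hy
    exact ⟨m, hm⟩
  -- adjacency facts
  have hadjss : ∀ i j, i ≠ j → G.Adj (a i) (a j) := fun i j h =>
    hK (haK i) (haK j) (ha_inj.ne h)
  have hadjsb : ∀ i m, G.Adj (a i) (b m) := fun i m => hcomp _ (haK i) _ (hbS m)
  -- midpoint arithmetic in ZMod k
  have hcop : Nat.Coprime 2 k := Nat.coprime_two_left.mpr hodd
  set u2 : (ZMod k)ˣ := ZMod.unitOfCoprime 2 hcop with hu2def
  have hu2 : (u2 : ZMod k) = 2 := by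
    rw [hu2def, ZMod.coe_unitOfCoprime]; norm_num
  set iv : ZMod k := ((u2⁻¹ : (ZMod k)ˣ) : ZMod k) with hivdef
  have h2iv : (2 : ZMod k) * iv = 1 := by
    rw [← hu2, hivdef]
    exact_mod_cast u2.mul_inv
  set mid : ZMod k → ZMod k → ZMod k := fun i j => iv * (i + j) with hmiddef
  have hmid2 : ∀ i j, 2 * mid i j = i + j := by
    intro i j
    simp only [hmiddef]
    rw [← mul_assoc, h2iv, one_mul]
  have hcancel : ∀ x y : ZMod k, 2 * x = 2 * y → x = y := by
    intro x y h
    have h' : iv * (2 * x) = iv * (2 * y) := by rw [h]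
    rwa [← mul_assoc, ← mul_assoc, mul_comm iv 2, h2iv, one_mul, one_mul] at h'
  have hmid_comm : ∀ i j, mid i j = mid j i := by
    intro i j; simp only [hmiddef]; rw [add_comm]
  have hmid_ne_left : ∀ i j, i ≠ j → mid i j ≠ i := by
    intro i j hne heq
    have h1 := hmid2 i j
    rw [heq] at h1
    have h2 : i + i = i + j := by rw [← two_mul, h1]
    exact hne (add_left_cancel h2)
  have hmid_ne_right : ∀ i j, i ≠ j → mid i j ≠ j := by
    intro i j hne
    rw [hmid_comm]
    exact hmid_ne_left j i hne.symm
  have hmid_partner : ∀ i m, mid i (2 * m - i) = m := by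
    intro i m
    apply hcancel
    rw [hmid2]; ring
  have hmid_sol : ∀ i j m, mid i j = m → j = 2 * m - i := by
    intro i j m h
    have h1 := hmid2 i j
    rw [h] at h1
    linear_combination -h1
  -- triangles
  set tri : Sym2 (ZMod k) → Finset V := Sym2.lift ⟨fun i j => {a i, a j, b (mid i j)}, by
    intro i j
    show ({a i, a j, b (mid i j)} : Finset V) = {a j, a i, b (mid j i)}
    rw [hmid_comm i j]
    ext v
    simp only [Finset.mem_insert, Finset.mem_singleton]
    tauto⟩ with htridef
  have htri_mk : ∀ i j, tri s(i, j) = {a i, a j, b (mid i j)} := fun i j => rfl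
  have htri_mem : ∀ i j v, v ∈ tri s(i, j) ↔ v = a i ∨ v = a j ∨ v = b (mid i j) := by
    intro i j v
    rw [htri_mk]
    simp [Finset.mem_insert]
  have hmemA : ∀ i j l, a l ∈ tri s(i, j) → l = i ∨ l = j := by
    intro i j l h
    rcases (htri_mem i j (a l)).mp h with h | h | h
    · exact Or.inl (ha_inj h)
    · exact Or.inr (ha_inj h)
    · exact absurd h (hab l _)
  have hmemB : ∀ i j m, b m ∈ tri s(i, j) → m = mid i j := by
    intro i j m h
    rcases (htri_mem i j (b m)).mp h with h | h | h
    · exact absurd h.symm (hab i m)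
    · exact absurd h.symm (hab j m)
    · exact hb_inj h
  -- the packing
  set P : Finset (Finset V) :=
    ((Finset.univ : Finset (Sym2 (ZMod k))).filter fun z => ¬ z.IsDiag).image tri with hPdef
  have hmemP : ∀ t, t ∈ P ↔ ∃ z : Sym2 (ZMod k), ¬z.IsDiag ∧ tri z = t := by
    intro t
    simp [hPdef, Finset.mem_image, Finset.mem_filter]
  have hmemP' : ∀ i j, i ≠ j → tri s(i, j) ∈ P := by
    intro i j h
    exact (hmemP _).mpr ⟨s(i, j), by rw [Sym2.mk_isDiag_iff]; exact h, rfl⟩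
  have htri_card : ∀ i j, i ≠ j → (tri s(i, j)).card = 3 := by
    intro i j h
    rw [htri_mk]
    exact Finset.card_eq_three.mpr
      ⟨a i, a j, b (mid i j), ha_inj.ne h, hab i _, hab j _, rfl⟩
  have htri_clique : ∀ i j, i ≠ j → G.IsClique ↑(tri s(i, j)) := by
    intro i j hij
    rw [SimpleGraph.isClique_iff]
    intro x hx y hy hxy
    rw [Finset.mem_coe, htri_mem] at hx hy
    rcases hx with rfl | rfl | rfl <;> rcases hy with rfl | rfl | rfl
    · exact absurd rfl hxy
    · exact hadjss i j hij
    · exact hadjsb i _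
    · exact (hadjss i j hij).symm
    · exact absurd rfl hxy
    · exact hadjsb j _
    · exact (hadjsb i _).symm
    · exact (hadjsb j _).symm
    · exact absurd rfl hxy
  -- a pair equality helper
  have pairEq : ∀ i j i' j' x y : ZMod k, x ≠ y → (x = i ∨ x = j) → (y = i ∨ y = j) →
      (x = i' ∨ x = j') → (y = i' ∨ y = j') → s(i, j) = s(i', j') := by
    intro i j i' j' x y hxy h1 h2 h3 h4
    have e1 : s(i, j) = s(x, y) := by
      rcases h1 with rfl | rfl <;> rcases h2 with rfl | rfl
      · exact absurd rfl hxy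
      · rfl
      · exact Sym2.eq_swap
      · exact absurd rfl hxy
    have e2 : s(i', j') = s(x, y) := by
      rcases h3 with rfl | rfl <;> rcases h4 with rfl | rfl
      · exact absurd rfl hxy
      · rfl
      · exact Sym2.eq_swap
      · exact absurd rfl hxy
    exact e1.trans e2.symm
  have pairOf : ∀ p q x : ZMod k, (x = p ∨ x = q) → s(p, q) = s(x, 2 * mid p q - x) := by
    intro p q x hx
    rcases hx with rfl | rfl
    · rw [← hmid_sol x q _ rfl]
    · rw [hmid_comm, ← hmid_sol x p _ rfl]
      exact Sym2.eq_swap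
  -- injectivity of tri on non-diagonal pairs
  have htri_inj : ∀ z1 z2 : Sym2 (ZMod k), ¬z1.IsDiag → ¬z2.IsDiag →
      tri z1 = tri z2 → z1 = z2 := by
    intro z1 z2 hd1 hd2 heq
    obtain ⟨i, j, rfl⟩ := sym2_exists_rep z1
    obtain ⟨i', j', rfl⟩ := sym2_exists_rep z2
    rw [Sym2.mk_isDiag_iff] at hd1 hd2
    have m1 : a i' ∈ tri s(i, j) := by
      rw [heq, htri_mem]; exact Or.inl rfl
    have m2 : a j' ∈ tri s(i, j) := by
      rw [heq, htri_mem]; exact Or.inr (Or.inl rfl)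
    exact pairEq i j i' j' i' j' hd2 (hmemA i j i' m1) (hmemA i j j' m2)
      (Or.inl rfl) (Or.inr rfl)
  -- packing property
  have hpack : IsTrianglePacking G P := by
    constructor
    · intro t ht
      obtain ⟨z, hzd, rfl⟩ := (hmemP t).mp ht
      obtain ⟨i, j, rfl⟩ := sym2_exists_rep z
      rw [Sym2.mk_isDiag_iff] at hzd
      exact ⟨htri_card i j hzd, htri_clique i j hzd⟩
    · intro t1 ht1 t2 ht2 hne
      obtain ⟨z1, hd1, rfl⟩ := (hmemP t1).mp ht1
      obtain ⟨z2, hd2, rfl⟩ := (hmemP t2).mp ht2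
      by_contra hcard
      push_neg at hcard
      obtain ⟨u, hu, v, hv, huv⟩ := Finset.one_lt_card.mp hcard
      obtain ⟨i, j, rfl⟩ := sym2_exists_rep z1
      obtain ⟨i', j', rfl⟩ := sym2_exists_rep z2
      rw [Sym2.mk_isDiag_iff] at hd1 hd2
      rw [Finset.mem_inter] at hu hv
      have hclass : ∀ w, w ∈ tri s(i, j) → w ∈ tri s(i', j') →
          (∃ x, w = a x ∧ (x = i ∨ x = j) ∧ (x = i' ∨ x = j')) ∨
          (w = b (mid i j) ∧ mid i j = mid i' j') := by
        intro w h1 h2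
        rcases (htri_mem i j w).mp h1 with rfl | rfl | rfl
        · exact Or.inl ⟨i, rfl, Or.inl rfl, hmemA i' j' i h2⟩
        · exact Or.inl ⟨j, rfl, Or.inr rfl, hmemA i' j' j h2⟩
        · exact Or.inr ⟨rfl, hmemB i' j' _ h2⟩
      have key : s(i, j) = s(i', j') := by
        rcases hclass u hu.1 hu.2 with ⟨x, rfl, hx1, hx2⟩ | ⟨rfl, hmm⟩
        · rcases hclass v hv.1 hv.2 with ⟨y, rfl, hy1, hy2⟩ | ⟨rfl, hmm⟩
          · exact pairEq i j i' j' x y (fun h => huv (by rw [h])) hx1 hy1 hx2 hy2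
          · have e1 : s(i, j) = s(x, 2 * mid i j - x) := pairOf i j x hx1
            have e2 : s(i', j') = s(x, 2 * mid i' j' - x) := pairOf i' j' x hx2
            rw [← hmm] at e2
            exact e1.trans e2.symm
        · rcases hclass v hv.1 hv.2 with ⟨y, rfl, hy1, hy2⟩ | ⟨rfl, -⟩
          · have e1 : s(i, j) = s(y, 2 * mid i j - y) := pairOf i j y hy1
            have e2 : s(i', j') = s(y, 2 * mid i' j' - y) := pairOf i' j' y hy2
            rw [← hmm] at e2
            exact e1.trans e2.symm
          · exact absurd rfl huv
      exact hne (by rw [key])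
  -- cardinality
  have hPcard : P.card = k.choose 2 := by
    rw [hPdef, Finset.card_image_of_injOn (fun z hz z' hz' h =>
      htri_inj z z' (Finset.mem_filter.mp hz).2 (Finset.mem_filter.mp hz').2 h)]
    rw [← Fintype.card_subtype]
    rw [Sym2.card_subtype_not_diag, ZMod.card]
  -- coverage of K pairs
  have hcover2 : ∀ x ∈ K, ∀ y ∈ K, x ≠ y → ∃ t ∈ P, x ∈ t ∧ y ∈ t := by
    intro x hx y hy hxy
    obtain ⟨i, rfl⟩ := ha_surj x hx
    obtain ⟨j, rfl⟩ := ha_surj y hy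
    have hij : i ≠ j := fun h => hxy (by rw [h])
    exact ⟨tri s(i, j), hmemP' i j hij, (htri_mem i j _).mpr (Or.inl rfl),
      (htri_mem i j _).mpr (Or.inr (Or.inl rfl))⟩
  -- edge classification
  have hedge : ∀ e ∈ G.edgeFinset,
      (∃ i j, i ≠ j ∧ e = s(a i, a j)) ∨ ∃ i m, e = s(a i, b m) := by
    intro e he
    obtain ⟨x, y, rfl⟩ := sym2_exists_rep e
    rw [SimpleGraph.mem_edgeFinset, SimpleGraph.mem_edgeSet] at he
    have hx : x ∈ K ∪ S := by rw [hcover]; exact Finset.mem_univ x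
    have hy : y ∈ K ∪ S := by rw [hcover]; exact Finset.mem_univ y
    rcases Finset.mem_union.mp hx with hx' | hx' <;> rcases Finset.mem_union.mp hy with hy' | hy'
    · obtain ⟨i, rfl⟩ := ha_surj x hx'
      obtain ⟨j, rfl⟩ := ha_surj y hy'
      exact Or.inl ⟨i, j, fun h => G.ne_of_adj he (by rw [h]), rfl⟩
    · obtain ⟨i, rfl⟩ := ha_surj x hx'
      obtain ⟨m, rfl⟩ := hb_surj y hy'
      exact Or.inr ⟨i, m, rfl⟩
    · obtain ⟨i, rfl⟩ := ha_surj y hy'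
      obtain ⟨m, rfl⟩ := hb_surj x hx'
      exact Or.inr ⟨i, m, Sym2.eq_swap⟩
    · exact absurd he (hS x hx' y hy')
  -- K-K edges: covered, not in M
  have hcovKK : ∀ i j, i ≠ j → ∃ t ∈ P, ∀ v ∈ s(a i, a j), v ∈ t := by
    intro i j hij
    refine ⟨tri s(i, j), hmemP' i j hij, ?_⟩
    intro v hv
    rcases Sym2.mem_iff.mp hv with rfl | rfl
    · exact (htri_mem i j _).mpr (Or.inl rfl)
    · exact (htri_mem i j _).mpr (Or.inr (Or.inl rfl))
  have hKKnotM : ∀ i j, s(a i, a j) ∉ M := by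
    intro i j h
    obtain ⟨l, hl⟩ := hM_eq _ h
    rw [Sym2.eq_iff] at hl
    rcases hl with ⟨-, h2⟩ | ⟨h1, -⟩
    · exact hab j l h2
    · exact hab i l h1
  -- K-S edges
  have hKSmem : ∀ i m, s(a i, b m) ∈ M ↔ m = i := by
    intro i m
    constructor
    · intro h
      obtain ⟨l, hl⟩ := hM_eq _ h
      rw [Sym2.eq_iff] at hl
      rcases hl with ⟨h1, h2⟩ | ⟨h1, -⟩
      · exact (hb_inj h2).trans (ha_inj h1).symm
      · exact absurd h1 (hab i l)
    · rintro rfl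
      exact hbM m
  have hKScov : ∀ i m, (∃ t ∈ P, ∀ v ∈ s(a i, b m), v ∈ t) ↔ m ≠ i := by
    intro i m
    constructor
    · rintro ⟨t, htP, hcov⟩ rfl
      obtain ⟨z, hzd, rfl⟩ := (hmemP t).mp htP
      obtain ⟨p, q, rfl⟩ := sym2_exists_rep z
      rw [Sym2.mk_isDiag_iff] at hzd
      have h1 : a m ∈ tri s(p, q) := hcov _ (Sym2.mem_mk_left _ _)
      have h2 : b m ∈ tri s(p, q) := hcov _ (Sym2.mem_mk_right _ _)
      have hm := hmemB p q m h2
      rcases hmemA p q m h1 with rfl | rfl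
      · exact hmid_ne_left m q hzd hm.symm
      · exact hmid_ne_right p m hzd hm.symm
    · intro hmi
      have hne : i ≠ 2 * m - i := by
        intro h
        apply hmi
        apply hcancel m i
        linear_combination -h
      refine ⟨tri s(i, 2 * m - i), hmemP' i _ hne, ?_⟩
      intro v hv
      rcases Sym2.mem_iff.mp hv with rfl | rfl
      · exact (htri_mem _ _ _).mpr (Or.inl rfl)
      · rw [htri_mem]
        right; right
        rw [hmid_partner]
  -- conclusion
  refine ⟨P, hpack, hPcard, hcover2, ?_⟩
  intro e he
  rcases hedge e he with ⟨i, j, hij, rfl⟩ | ⟨i, m, rfl⟩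
  · exact ⟨fun h => absurd h (hKKnotM i j), fun h => absurd (hcovKK i j hij) h⟩
  · rw [hKSmem i m, hKScov i m, not_ne_iff]
end

section
/- Let G be a graph whose vertex set is partitioned into a clique K and an independent set S with |K| = |S| = k and K complete to S, where k is even. Then there exists a triangle packing of size binom(k,2) using all edges inside K, such that the edges not used by the packing form a star with center in S whose leaves are all vertices of K; moreover, the center vertex of this star can be chosen arbitrarily in S. -/
open Finset

/-!
Colour the edges of the complete graph on `K` properly with the `k - 1` vertices of `S \ {s₀}`
(a one-factorization, which exists because `k` is even) and take, for every edge `ab` of `K`,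
the triangle `{a, b, colour(ab)}`. Properness makes these triangles pairwise edge-disjoint.
With only `k - 1` colours every vertex of `K` sees every colour, so every edge between `K` and
`S \ {s₀}` is covered; the edges at `s₀` are the only ones left.
-/

section EdgeColoring

variable {α β γ δ : Type*}

/-- A proper colouring, with colours in `C`, of the edges of the complete graph on `K`. -/
structure IsProperEdgeColoring (K : Finset α) (C : Finset β) (col : Sym2 α → β) : Prop where
  mapsTo : ∀ a ∈ K, ∀ b ∈ K, a ≠ b → col s(a, b) ∈ C
  injOn : ∀ a ∈ K, Set.InjOn (fun b => col s(a, b)) (↑K \ {a})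

theorem Sym2.mem_finset_of_mem_mk {K : Finset α} {a b x : α} (ha : a ∈ K) (hb : b ∈ K)
    (hx : x ∈ s(a, b)) : x ∈ K :=
  (Sym2.mem_iff.mp hx).elim (· ▸ ha) (· ▸ hb)

variable {K : Finset α} {C : Finset β} {col : Sym2 α → β}

theorem IsProperEdgeColoring.exists_color_eq [DecidableEq α] (h : IsProperEdgeColoring K C col)
    (hC : #C + 1 = #K) {a : α} (ha : a ∈ K) {c : β} (hc : c ∈ C) :
    ∃ b ∈ K, b ≠ a ∧ col s(a, b) = c := by
  have hmaps : Set.MapsTo (fun b => col s(a, b)) ↑(K.erase a) ↑C := fun b hb => by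
    obtain ⟨hba, hb⟩ := mem_erase.mp hb
    exact h.mapsTo a ha b hb hba.symm
  obtain ⟨b, hb, hbc⟩ := surjOn_of_injOn_of_card_le _ hmaps (coe_erase a K ▸ h.injOn a ha)
    (by rw [card_erase_of_mem ha]; omega) hc
  exact ⟨b, mem_of_mem_erase hb, ne_of_mem_erase hb, hbc⟩

theorem IsProperEdgeColoring.comp (h : IsProperEdgeColoring K C col) {L : Finset γ}
    {D : Finset δ} {φ : γ → α} {ψ : β → δ} (hφ : Set.InjOn φ L) (hφK : Set.MapsTo φ L K)
    (hψ : Set.InjOn ψ C) (hψD : Set.MapsTo ψ C D) :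
    IsProperEdgeColoring L D (fun z => ψ (col (z.map φ))) where
  mapsTo a ha b hb hab := hψD (h.mapsTo _ (hφK ha) _ (hφK hb) (hφ.ne ha hb hab))
  injOn a ha b hb b' hb' hbb' := by
    have hne : ∀ {c}, c ∈ (↑L \ {a} : Set γ) → φ c ∈ (↑K \ {φ a} : Set α) := fun hc =>
      ⟨hφK hc.1, hφ.ne hc.1 ha hc.2⟩
    have hcol := hψ (h.mapsTo _ (hφK ha) _ (hφK hb.1) (Ne.symm (hne hb).2))
      (h.mapsTo _ (hφK ha) _ (hφK hb'.1) (Ne.symm (hne hb').2)) hbb'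
    exact hφ hb.1 hb'.1 (h.injOn _ (hφK ha) (hne hb) (hne hb') hcol)

theorem IsProperEdgeColoring.eq_of_color_eq (h : IsProperEdgeColoring K C col) {a b a' b' x : α}
    (ha : a ∈ K) (hb : b ∈ K) (hab : a ≠ b) (ha' : a' ∈ K) (hb' : b' ∈ K) (hab' : a' ≠ b')
    (hx : x ∈ s(a, b)) (hx' : x ∈ s(a', b')) (hcol : col s(a, b) = col s(a', b')) :
    s(a, b) = s(a', b') := by
  have reorient : ∀ {a b}, a ∈ K → b ∈ K → a ≠ b → x ∈ s(a, b) →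
      ∃ c ∈ (↑K \ {x} : Set α), s(a, b) = s(x, c) := by
    intro a b ha hb hab hx
    rcases Sym2.mem_iff.mp hx with rfl | rfl
    exacts [⟨b, ⟨hb, hab.symm⟩, rfl⟩, ⟨a, ⟨ha, hab⟩, Sym2.eq_swap⟩]
  obtain ⟨c, hc, hz⟩ := reorient ha hb hab hx
  obtain ⟨c', hc', hz'⟩ := reorient ha' hb' hab' hx'
  rw [hz, hz'] at hcol ⊢
  rw [h.injOn x (Sym2.mem_finset_of_mem_mk ha hb hx) hc hc' hcol]

end EdgeColoring

section OneFactorization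

/-- Colour class `r` is the near-perfect matching `{a, b}` with `a + b = r` of `ZMod n`,
completed by the edge from `none` to `r / 2`. -/
def zmodColor {n : ℕ} : Option (ZMod n) → Option (ZMod n) → ZMod n
  | none, none => 0
  | none, some b => 2 * b
  | some a, none => 2 * a
  | some a, some b => a + b

theorem zmodColor_comm {n : ℕ} (x y : Option (ZMod n)) : zmodColor x y = zmodColor y x := by
  cases x <;> cases y <;> simp only [zmodColor, add_comm]

def zmodEdgeColor (n : ℕ) : Sym2 (Option (ZMod n)) → ZMod n :=
  Sym2.lift ⟨zmodColor, zmodColor_comm⟩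

theorem isProperEdgeColoring_zmodEdgeColor {n : ℕ} [NeZero n] (hn : Odd n) :
    IsProperEdgeColoring univ univ (zmodEdgeColor n) := by
  have h2 : IsUnit (2 : ZMod n) := by
    exact_mod_cast (ZMod.isUnit_iff_coprime 2 n).mpr (Nat.coprime_two_left.mpr hn)
  refine ⟨fun _ _ _ _ _ => mem_univ _, fun x _ y hy z hz hyz => ?_⟩
  simp only [Set.mem_sdiff, coe_univ, Set.mem_univ, Set.mem_singleton_iff, true_and] at hy hz
  simp only [zmodEdgeColor, Sym2.lift_mk] at hyz
  rcases x with _ | a <;> rcases y with _ | b <;> rcases z with _ | c <;>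
    simp only [zmodColor, reduceCtorEq, not_false_eq_true, not_true_eq_false,
      Option.some.injEq] at hy hz hyz ⊢
  · exact h2.mul_left_cancel hyz
  · exact hz (by linear_combination -hyz)
  · exact hy (by linear_combination hyz)
  · exact add_left_cancel hyz

theorem exists_isProperEdgeColoring {α β : Type*} (K : Finset α) (C : Finset β) (hK : Even #K)
    (hC : #C + 1 = #K) : ∃ col : Sym2 α → β, IsProperEdgeColoring K C col := by
  classical
  have hn : Odd #C := Nat.not_even_iff_odd.mp (Nat.even_add_one.mp (hC ▸ hK))
  have : NeZero #C := ⟨hn.pos.ne'⟩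
  let eK : K ≃ Option (ZMod #C) := Fintype.equivOfCardEq (by simp [ZMod.card, hC])
  let eC : ZMod #C ≃ C := Fintype.equivOfCardEq (by simp [ZMod.card])
  refine ⟨_, (isProperEdgeColoring_zmodEdgeColor hn).comp
    (φ := fun a => if h : a ∈ K then eK ⟨a, h⟩ else none) (ψ := fun r => (eC r : β))
    (fun a ha b hb hab => ?_) (fun _ _ => mem_coe.mpr (mem_univ _))
    (fun r _ s _ hrs => eC.injective (Subtype.ext hrs)) (fun r _ => (eC r).2)⟩
  simp only [mem_coe.mp ha, mem_coe.mp hb, dite_true] at hab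
  exact congrArg Subtype.val (eK.injective hab)

end OneFactorization

section TrianglePacking

variable {V : Type*} [DecidableEq V] {K C : Finset V} {col : Sym2 V → V} {a b a' b' x y : V}

def edgeTriangle (col : Sym2 V → V) (z : Sym2 V) : Finset V := insert (col z) z.toFinset

def colorTriangles (K : Finset V) (col : Sym2 V → V) : Finset (Finset V) :=
  (K.offDiag.image Sym2.mk.uncurry).image (edgeTriangle col)

theorem mem_edgeTriangle {z : Sym2 V} : x ∈ edgeTriangle col z ↔ x = col z ∨ x ∈ z := by
  rw [edgeTriangle, mem_insert, Sym2.mem_toFinset]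

theorem mem_colorTriangles {t : Finset V} :
    t ∈ colorTriangles K col ↔ ∃ a ∈ K, ∃ b ∈ K, a ≠ b ∧ edgeTriangle col s(a, b) = t := by
  simp only [colorTriangles, mem_image, mem_offDiag, Prod.exists, Function.uncurry_apply_pair]
  grind

theorem eq_color_of_mem_edgeTriangle (ha : a ∈ K) (hb : b ∈ K)
    (hx : x ∈ edgeTriangle col s(a, b)) (hxK : x ∉ K) : x = col s(a, b) :=
  (mem_edgeTriangle.mp hx).resolve_right fun hxz => hxK (Sym2.mem_finset_of_mem_mk ha hb hxz)

namespace IsProperEdgeColoring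

theorem mem_mk_of_mem_edgeTriangle (h : IsProperEdgeColoring K C col) (hKC : Disjoint K C)
    (ha : a ∈ K) (hb : b ∈ K) (hab : a ≠ b) (hx : x ∈ edgeTriangle col s(a, b)) (hxK : x ∈ K) :
    x ∈ s(a, b) :=
  (mem_edgeTriangle.mp hx).resolve_left fun e =>
    disjoint_left.mp hKC hxK (e ▸ h.mapsTo a ha b hb hab)

theorem card_edgeTriangle (h : IsProperEdgeColoring K C col) (hKC : Disjoint K C) (ha : a ∈ K)
    (hb : b ∈ K) (hab : a ≠ b) : #(edgeTriangle col s(a, b)) = 3 := by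
  rw [edgeTriangle, card_insert_of_notMem, Sym2.toFinset_mk_eq, card_pair hab]
  exact fun hmem => disjoint_right.mp hKC (h.mapsTo a ha b hb hab)
    (Sym2.mem_finset_of_mem_mk ha hb (Sym2.mem_toFinset.mp hmem))

theorem card_inter_edgeTriangle_le_one (h : IsProperEdgeColoring K C col) (hKC : Disjoint K C)
    (ha : a ∈ K) (hb : b ∈ K) (hab : a ≠ b) (ha' : a' ∈ K) (hb' : b' ∈ K) (hab' : a' ≠ b')
    (hne : s(a, b) ≠ s(a', b')) :
    #(edgeTriangle col s(a, b) ∩ edgeTriangle col s(a', b')) ≤ 1 := by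
  have eq_of_mem_K : ∀ x ∈ edgeTriangle col s(a, b) ∩ edgeTriangle col s(a', b'),
      ∀ y ∈ edgeTriangle col s(a, b) ∩ edgeTriangle col s(a', b'), x ∈ K → x = y := by
    intro x hx y hy hxK
    rw [mem_inter] at hx hy
    have hxz := h.mem_mk_of_mem_edgeTriangle hKC ha hb hab hx.1 hxK
    have hxz' := h.mem_mk_of_mem_edgeTriangle hKC ha' hb' hab' hx.2 hxK
    by_contra hxy
    by_cases hyK : y ∈ K
    · have hyz := h.mem_mk_of_mem_edgeTriangle hKC ha hb hab hy.1 hyK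
      have hyz' := h.mem_mk_of_mem_edgeTriangle hKC ha' hb' hab' hy.2 hyK
      exact hne (((Sym2.mem_and_mem_iff hxy).mp ⟨hxz, hyz⟩).trans
        ((Sym2.mem_and_mem_iff hxy).mp ⟨hxz', hyz'⟩).symm)
    · exact hne (h.eq_of_color_eq ha hb hab ha' hb' hab' hxz hxz'
        ((eq_color_of_mem_edgeTriangle ha hb hy.1 hyK).symm.trans
          (eq_color_of_mem_edgeTriangle ha' hb' hy.2 hyK)))
  refine card_le_one.mpr fun x hx y hy => ?_
  by_cases hxK : x ∈ K
  · exact eq_of_mem_K x hx y hy hxK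
  by_cases hyK : y ∈ K
  · exact (eq_of_mem_K y hy x hx hyK).symm
  rw [mem_inter] at hx hy
  exact (eq_color_of_mem_edgeTriangle ha hb hx.1 hxK).trans
    (eq_color_of_mem_edgeTriangle ha hb hy.1 hyK).symm

theorem card_colorTriangles (h : IsProperEdgeColoring K C col) (hKC : Disjoint K C) :
    #(colorTriangles K col) = (#K).choose 2 := by
  rw [colorTriangles, card_image_of_injOn, Sym2.card_image_offDiag]
  intro z hz z' hz' hzz'
  simp only [coe_image, Set.mem_image, mem_coe, mem_offDiag, Prod.exists,
    Function.uncurry_apply_pair] at hz hz'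
  obtain ⟨a, b, ⟨ha, hb, hab⟩, rfl⟩ := hz
  obtain ⟨a', b', ⟨ha', hb', hab'⟩, rfl⟩ := hz'
  by_contra hne
  have := h.card_inter_edgeTriangle_le_one hKC ha hb hab ha' hb' hab' hne
  rw [hzz', inter_self, h.card_edgeTriangle hKC ha' hb' hab'] at this
  omega

theorem isTrianglePacking_colorTriangles (h : IsProperEdgeColoring K C col)
    (hKC : Disjoint K C) {G : SimpleGraph V} (hK : G.IsClique ↑K)
    (hcomp : ∀ a ∈ K, ∀ c ∈ C, G.Adj a c) : IsTrianglePacking G (colorTriangles K col) := by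
  refine ⟨fun t ht => ?_, fun t ht t' ht' htt' => ?_⟩
  · obtain ⟨a, ha, b, hb, hab, rfl⟩ := mem_colorTriangles.mp ht
    refine ⟨h.card_edgeTriangle hKC ha hb hab, ?_⟩
    rw [edgeTriangle, coe_insert, SimpleGraph.isClique_insert]
    refine ⟨hK.subset fun x hx => Sym2.mem_finset_of_mem_mk ha hb (Sym2.mem_toFinset.mp hx),
      fun x hx _ => (hcomp x ?_ _ (h.mapsTo a ha b hb hab)).symm⟩
    exact Sym2.mem_finset_of_mem_mk ha hb (Sym2.mem_toFinset.mp hx)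
  · obtain ⟨a, ha, b, hb, hab, rfl⟩ := mem_colorTriangles.mp ht
    obtain ⟨a', ha', b', hb', hab', rfl⟩ := mem_colorTriangles.mp ht'
    exact h.card_inter_edgeTriangle_le_one hKC ha hb hab ha' hb' hab' fun e => htt' (e ▸ rfl)

theorem exists_mem_colorTriangles_iff (h : IsProperEdgeColoring K C col) (hC : #C + 1 = #K)
    (hxy : x ≠ y) :
    (∃ t ∈ colorTriangles K col, x ∈ t ∧ y ∈ t) ↔ x ∈ K ∪ C ∧ y ∈ K ∪ C ∧ (x ∈ K ∨ y ∈ K) := by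
  constructor
  · rintro ⟨t, ht, hx, hy⟩
    obtain ⟨a, ha, b, hb, hab, rfl⟩ := mem_colorTriangles.mp ht
    have hsub : ∀ {v}, v ∈ edgeTriangle col s(a, b) → v ∈ K ∪ C := fun {v} hv => by
      by_cases hvK : v ∈ K
      · exact mem_union_left C hvK
      · exact mem_union_right K
          (eq_color_of_mem_edgeTriangle ha hb hv hvK ▸ h.mapsTo a ha b hb hab)
    refine ⟨hsub hx, hsub hy, ?_⟩
    by_contra! ⟨hxK, hyK⟩
    exact hxy ((eq_color_of_mem_edgeTriangle ha hb hx hxK).trans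
      (eq_color_of_mem_edgeTriangle ha hb hy hyK).symm)
  · have cover : ∀ {x y}, x ∈ K → y ∈ K ∪ C → x ≠ y →
        ∃ t ∈ colorTriangles K col, x ∈ t ∧ y ∈ t := by
      intro x y hx hy hxy
      rcases mem_union.mp hy with hyK | hyC
      · exact ⟨_, mem_colorTriangles.mpr ⟨x, hx, y, hyK, hxy, rfl⟩,
          mem_edgeTriangle.mpr (Or.inr (Sym2.mem_mk_left x y)),
          mem_edgeTriangle.mpr (Or.inr (Sym2.mem_mk_right x y))⟩
      · obtain ⟨b, hb, hbx, rfl⟩ := h.exists_color_eq hC hx hyC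
        exact ⟨_, mem_colorTriangles.mpr ⟨x, hx, b, hb, hbx.symm, rfl⟩,
          mem_edgeTriangle.mpr (Or.inr (Sym2.mem_mk_left x b)), mem_edgeTriangle.mpr (Or.inl rfl)⟩
    rintro ⟨hx, hy, hxK | hyK⟩
    · exact cover hxK hy hxy
    · obtain ⟨t, ht, hyt, hxt⟩ := cover hyK hx hxy.symm
      exact ⟨t, ht, hxt, hyt⟩

end IsProperEdgeColoring

end TrianglePacking

/-- In a complete split graph with clique `K` and independent set `S` of equal even size `k`,
for every prescribed center `s₀ ∈ S` there is a triangle packing of size `k choose 2`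
using all edges inside `K` whose unused edges form the star with center `s₀` and leaf
set `K`. -/
theorem complete_split_packing_even {V : Type*} [Fintype V] [DecidableEq V]
    (G : SimpleGraph V) [DecidableRel G.Adj] (K S : Finset V) (k : ℕ) (heven : Even k)
    (hdisj : Disjoint K S) (hcover : K ∪ S = Finset.univ)
    (hK : G.IsClique ↑K) (hS : ∀ u ∈ S, ∀ v ∈ S, ¬ G.Adj u v)
    (hcomp : ∀ u ∈ K, ∀ v ∈ S, G.Adj u v)
    (hKcard : K.card = k) (hScard : S.card = k)
    (s₀ : V) (hs₀ : s₀ ∈ S) :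
    ∃ P : Finset (Finset V), IsTrianglePacking G P ∧ P.card = k.choose 2 ∧
      (∀ a ∈ K, ∀ b ∈ K, a ≠ b → ∃ t ∈ P, a ∈ t ∧ b ∈ t) ∧
      (∀ e ∈ G.edgeFinset,
        ((∃ a ∈ K, e = s(s₀, a)) ↔ ¬ ∃ t ∈ P, ∀ v ∈ e, v ∈ t)) := by
  have hC : #(S.erase s₀) + 1 = #K := by rw [card_erase_add_one hs₀, hScard, hKcard]
  have hKC : Disjoint K (S.erase s₀) := disjoint_of_subset_right (erase_subset _ _) hdisj
  obtain ⟨col, hcol⟩ := exists_isProperEdgeColoring K (S.erase s₀) (hKcard ▸ heven) hC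
  refine ⟨colorTriangles K col,
    hcol.isTrianglePacking_colorTriangles hKC hK fun a ha c hc =>
      hcomp a ha c (mem_of_mem_erase hc),
    hKcard ▸ hcol.card_colorTriangles hKC,
    fun a ha b hb hab => (hcol.exists_mem_colorTriangles_iff hC hab).mpr
      ⟨mem_union_left _ ha, mem_union_left _ hb, Or.inl ha⟩, ?_⟩
  intro e he
  induction e using Sym2.ind with | _ x y => ?_
  have hadj : G.Adj x y := SimpleGraph.mem_edgeFinset.mp he
  have hx : x ∈ K ∨ x ∈ S := mem_union.mp (hcover ▸ mem_univ x)
  have hy : y ∈ K ∨ y ∈ S := mem_union.mp (hcover ▸ mem_univ y)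
  have hxyS : ¬ (x ∈ S ∧ y ∈ S) := fun ⟨hxS, hyS⟩ => hS x hxS y hyS hadj
  have hKS := disjoint_left.mp hdisj
  simp only [Sym2.mem_iff, forall_eq_or_imp, forall_eq, Sym2.eq_iff, mem_union, mem_erase,
    hcol.exists_mem_colorTriangles_iff hC hadj.ne]
  grind
end

section
/- Let K be a clique and S an independent set complete to each other with |S| < |K|. Then there exists a triangle packing in K ∪ S of size |S| · floor(|K|/2). -/
open Finset

private lemma pair_eq_elim {α : Type*} [DecidableEq α] {a b c d : α}
    (h : ({a, b} : Finset α) = {c, d}) : (a = c ∧ b = d) ∨ (a = d ∧ b = c) := by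
  have ha : a ∈ ({c, d} : Finset α) := h ▸ by simp
  have hb : b ∈ ({c, d} : Finset α) := h ▸ by simp
  have hc : c ∈ ({a, b} : Finset α) := h ▸ by simp
  have hd : d ∈ ({a, b} : Finset α) := h ▸ by simp
  simp at ha hb hc hd
  rcases ha with h1 | h1 <;> rcases hb with h2 | h2 <;> tauto

private lemma pair_inter_card_le {α : Type*} [DecidableEq α] {X Y : Finset α}
    (hX : X.card = 2) (hY : Y.card = 2) (hne : X ≠ Y) : (X ∩ Y).card ≤ 1 := by
  by_contra h
  push_neg at h
  have h1 : X ∩ Y = X := Finset.eq_of_subset_of_card_le Finset.inter_subset_left (by omega)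
  have h2 : X ∩ Y = Y := Finset.eq_of_subset_of_card_le Finset.inter_subset_right (by omega)
  exact hne (h1.symm.trans h2)

private lemma exists_pair_system (n s : ℕ) (hs : s < n) :
    ∃ A B : Fin s → Fin (n / 2) → Fin n,
      (∀ c p, A c p ≠ B c p) ∧
      (∀ c p p', p ≠ p' →
        A c p ≠ A c p' ∧ A c p ≠ B c p' ∧ B c p ≠ A c p' ∧ B c p ≠ B c p') ∧
      (∀ c c' p p', ({A c p, B c p} : Finset (Fin n)) = {A c' p', B c' p'} → c = c') := by
  have hn1 : 1 ≤ n := by omega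
  set M : ℕ := if n % 2 = 0 then n - 1 else n with hMdef
  have hM : (n % 2 = 0 ∧ M = n - 1) ∨ (n % 2 = 1 ∧ M = n) := by
    by_cases h : n % 2 = 0 <;> simp [hMdef, h] <;> omega
  clear_value M
  clear hMdef
  have hMpos : 0 < M := by omega
  haveI : NeZero M := ⟨by omega⟩
  have hMle : M ≤ n := by omega
  have hval : ∀ a : ℕ, a < M → ((a : ZMod M)).val = a := fun a ha => ZMod.val_cast_of_lt ha
  have castinj : ∀ a b : ℕ, a < M → b < M → ((a : ZMod M) = (b : ZMod M)) → a = b := by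
    intro a b ha hb h
    rw [← hval a ha, ← hval b hb, h]
  have h2half : (2 : ZMod M) * (((M + 1) / 2 : ℕ) : ZMod M) = 1 := by
    have h1 : (2 * ((M + 1) / 2) : ℕ) = M + 1 := by omega
    calc (2 : ZMod M) * (((M + 1) / 2 : ℕ) : ZMod M)
        = ((2 * ((M + 1) / 2) : ℕ) : ZMod M) := by push_cast; ring
      _ = ((M + 1 : ℕ) : ZMod M) := by rw [h1]
      _ = 1 := by push_cast; simp
  have hdbl : ∀ z w : ZMod M, 2 * z = 2 * w → z = w := by
    intro z w h
    linear_combination (((M + 1) / 2 : ℕ) : ZMod M) * h + (w - z) * h2half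
  let xx : Fin s → ZMod M := fun c => (((M + 1) / 2 : ℕ) : ZMod M) * ((c : ℕ) : ZMod M)
  have htwox : ∀ c : Fin s, (2 : ZMod M) * xx c = ((c : ℕ) : ZMod M) := by
    intro c
    simp only [xx]
    linear_combination ((c : ℕ) : ZMod M) * h2half
  have xxinj : ∀ c c' : Fin s, xx c = xx c' → c = c' := by
    intro c c' h
    have h2 : ((c : ℕ) : ZMod M) = ((c' : ℕ) : ZMod M) := by
      rw [← htwox c, ← htwox c', h]
    exact Fin.ext (castinj _ _ (lt_of_lt_of_le c.isLt (by omega))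
      (lt_of_lt_of_le c'.isLt (by omega)) h2)
  have esub : ∀ (x : ZMod M) (d : ℕ), d ≤ M →
      x - (d : ZMod M) = x + ((M - d : ℕ) : ZMod M) := by
    intro x d h
    have h2 : ((M - d : ℕ) : ZMod M) = (M : ℕ) - (d : ℕ) := by
      push_cast [Nat.cast_sub h]; ring
    rw [h2]
    simp [ZMod.natCast_self]
    ring
  have hvalne : ∀ (x : ZMod M) (a b : ℕ), a < M → b < M → a ≠ b →
      (x + (a : ZMod M)).val ≠ (x + (b : ZMod M)).val := by
    intro x a b ha hb hab hv
    have h := ZMod.val_injective M hv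
    exact hab (castinj a b ha hb (by linear_combination h))
  -- wrappers
  have hv0p : ∀ (x : ZMod M) (b : ℕ), 0 < b → b < M → x.val ≠ (x + (b : ZMod M)).val := by
    intro x b h1 h2
    have := hvalne x 0 b (by omega) (by omega) (by omega)
    simpa using this
  have hvpm : ∀ (x : ZMod M) (a b : ℕ), a < M → 0 < b → b ≤ M → a ≠ M - b →
      (x + (a : ZMod M)).val ≠ (x - (b : ZMod M)).val := by
    intro x a b ha hb1 hb2 hne
    rw [esub x b hb2]
    exact hvalne x a (M - b) ha (by omega) hne
  have hvmm : ∀ (x : ZMod M) (a b : ℕ), 0 < a → a ≤ M → 0 < b → b ≤ M → a ≠ b →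
      (x - (a : ZMod M)).val ≠ (x - (b : ZMod M)).val := by
    intro x a b ha1 ha2 hb1 hb2 hne
    rw [esub x a ha2, esub x b hb2]
    exact hvalne x (M - a) (M - b) (by omega) (by omega) (by omega)
  have hv0m : ∀ (x : ZMod M) (b : ℕ), 0 < b → b < M → x.val ≠ (x - (b : ZMod M)).val := by
    intro x b h1 h2
    rw [esub x b (by omega)]
    exact hv0p x (M - b) (by omega) (by omega)
  refine ⟨fun c p => if 2 * (p.1 + 1) = n then ⟨n - 1, Nat.sub_lt hn1 Nat.one_pos⟩
      else ⟨(xx c + ((p.1 + 1 : ℕ) : ZMod M)).val, lt_of_lt_of_le (ZMod.val_lt _) hMle⟩,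
    fun c p => if 2 * (p.1 + 1) = n then ⟨(xx c).val, lt_of_lt_of_le (ZMod.val_lt _) hMle⟩
      else ⟨(xx c - ((p.1 + 1 : ℕ) : ZMod M)).val, lt_of_lt_of_le (ZMod.val_lt _) hMle⟩,
    ?_, ?_, ?_⟩
  · -- A ≠ B
    intro c p
    have hp := p.isLt
    by_cases h : 2 * (p.1 + 1) = n
    · simp only [if_pos h, ne_eq, Fin.mk.injEq]
      have hlt : (xx c).val < M := ZMod.val_lt _
      omega
    · simp only [if_neg h, ne_eq, Fin.mk.injEq]
      exact hvpm (xx c) _ _ (by omega) (by omega) (by omega) (by omega)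
  · -- same colour, different slots
    intro c p p' hpp'
    have hp := p.isLt
    have hp' := p'.isLt
    have hd : p.1 + 1 ≠ p'.1 + 1 := fun h => hpp' (Fin.ext (by omega))
    by_cases h1 : 2 * (p.1 + 1) = n <;> by_cases h2 : 2 * (p'.1 + 1) = n
    · exact absurd (Fin.ext (by omega : p.1 = p'.1)) hpp'
    · simp only [if_pos h1, if_neg h2, ne_eq, Fin.mk.injEq]
      have v1 := ZMod.val_lt (xx c + ((p'.1 + 1 : ℕ) : ZMod M))
      have v2 := ZMod.val_lt (xx c - ((p'.1 + 1 : ℕ) : ZMod M))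
      refine ⟨by omega, by omega, ?_, ?_⟩
      · exact hv0p (xx c) _ (by omega) (by omega)
      · exact hv0m (xx c) _ (by omega) (by omega)
    · simp only [if_neg h1, if_pos h2, ne_eq, Fin.mk.injEq]
      have v1 := ZMod.val_lt (xx c + ((p.1 + 1 : ℕ) : ZMod M))
      have v2 := ZMod.val_lt (xx c - ((p.1 + 1 : ℕ) : ZMod M))
      refine ⟨by omega, ?_, by omega, ?_⟩
      · exact (hv0p (xx c) _ (by omega) (by omega)).symm
      · exact (hv0m (xx c) _ (by omega) (by omega)).symm
    · simp only [if_neg h1, if_neg h2, ne_eq, Fin.mk.injEq]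
      refine ⟨?_, ?_, ?_, ?_⟩
      · exact hvalne (xx c) _ _ (by omega) (by omega) (by omega)
      · exact hvpm (xx c) _ _ (by omega) (by omega) (by omega) (by omega)
      · exact (hvpm (xx c) _ _ (by omega) (by omega) (by omega) (by omega)).symm
      · exact hvmm (xx c) _ _ (by omega) (by omega) (by omega) (by omega) (by omega)
  · -- cross colour
    intro c c' p p' heq
    have hp := p.isLt
    have hp' := p'.isLt
    by_cases h1 : 2 * (p.1 + 1) = n <;> by_cases h2 : 2 * (p'.1 + 1) = n
    · simp only [if_pos h1, if_pos h2] at heq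
      rcases pair_eq_elim heq with ⟨e1, e2⟩ | ⟨e1, e2⟩
      · simp only [Fin.mk.injEq] at e2
        exact xxinj _ _ (ZMod.val_injective M e2)
      · simp only [Fin.mk.injEq] at e1
        have := ZMod.val_lt (xx c')
        omega
    · simp only [if_pos h1, if_neg h2] at heq
      rcases pair_eq_elim heq with ⟨e1, e2⟩ | ⟨e1, e2⟩ <;> simp only [Fin.mk.injEq] at e1
      · have := ZMod.val_lt (xx c' + ((p'.1 + 1 : ℕ) : ZMod M)); omega
      · have := ZMod.val_lt (xx c' - ((p'.1 + 1 : ℕ) : ZMod M)); omega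
    · simp only [if_neg h1, if_pos h2] at heq
      rcases pair_eq_elim heq with ⟨e1, e2⟩ | ⟨e1, e2⟩
      · simp only [Fin.mk.injEq] at e1
        have := ZMod.val_lt (xx c + ((p.1 + 1 : ℕ) : ZMod M)); omega
      · simp only [Fin.mk.injEq] at e2
        have := ZMod.val_lt (xx c - ((p.1 + 1 : ℕ) : ZMod M)); omega
    · simp only [if_neg h1, if_neg h2] at heq
      rcases pair_eq_elim heq with ⟨e1, e2⟩ | ⟨e1, e2⟩ <;>
          simp only [Fin.mk.injEq] at e1 e2
      · have f1 := ZMod.val_injective M e1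
        have f2 := ZMod.val_injective M e2
        exact xxinj _ _ (hdbl _ _ (by linear_combination f1 + f2))
      · have f1 := ZMod.val_injective M e1
        have f2 := ZMod.val_injective M e2
        exact xxinj _ _ (hdbl _ _ (by linear_combination f1 + f2))

/-- If a clique `K` and an independent set `S` are complete to each other and `|S| < |K|`,
then there is a triangle packing inside `K ∪ S` of size `|S| * ⌊|K| / 2⌋`. -/
theorem clique_indep_packing_small {V : Type*} [Fintype V] [DecidableEq V]
    (G : SimpleGraph V) (K S : Finset V)
    (hdisj : Disjoint K S)
    (hK : G.IsClique ↑K) (hS : ∀ u ∈ S, ∀ v ∈ S, ¬ G.Adj u v)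
    (hcomp : ∀ u ∈ K, ∀ v ∈ S, G.Adj u v)
    (hcard : S.card < K.card) :
    ∃ P : Finset (Finset V), IsTrianglePacking G P ∧
      (∀ t ∈ P, t ⊆ K ∪ S) ∧ P.card = S.card * (K.card / 2) := by
  classical
  obtain ⟨A, B, hAB, hsame, hcross⟩ := exists_pair_system K.card S.card hcard
  obtain ⟨k, hkinj, hkmem⟩ : ∃ k : Fin K.card → V, Function.Injective k ∧ ∀ i, k i ∈ K :=
    ⟨fun i => (K.equivFin.symm i : V),
      fun i j h => K.equivFin.symm.injective (Subtype.ext h),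
      fun i => (K.equivFin.symm i).2⟩
  obtain ⟨u, huinj, humem⟩ : ∃ u : Fin S.card → V, Function.Injective u ∧ ∀ i, u i ∈ S :=
    ⟨fun i => (S.equivFin.symm i : V),
      fun i j h => S.equivFin.symm.injective (Subtype.ext h),
      fun i => (S.equivFin.symm i).2⟩
  have hku : ∀ i j, k i ≠ u j := fun i j h =>
    (Finset.disjoint_left.mp hdisj (hkmem i)) (h ▸ humem j)
  set T : Fin S.card × Fin (K.card / 2) → Finset V :=
    fun cp => {u cp.1, k (A cp.1 cp.2), k (B cp.1 cp.2)} with hT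
  have hkAB : ∀ c p, k (A c p) ≠ k (B c p) := fun c p h => hAB c p (hkinj h)
  have humemT : ∀ c p, u c ∉ ({k (A c p), k (B c p)} : Finset V) := by
    intro c p h
    simp only [Finset.mem_insert, Finset.mem_singleton] at h
    rcases h with h | h <;> exact hku _ _ h.symm
  have hTinj : Function.Injective T := by
    rintro ⟨c, p⟩ ⟨c', p'⟩ h
    simp only [hT] at h
    have h1 : u c ∈ ({u c', k (A c' p'), k (B c' p')} : Finset V) := h ▸ by simp
    simp only [Finset.mem_insert, Finset.mem_singleton] at h1
    have hcc : c = c' := by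
      rcases h1 with h1 | h1 | h1
      · exact huinj h1
      · exact absurd h1.symm (hku _ _)
      · exact absurd h1.symm (hku _ _)
    subst hcc
    have h2 : k (A c p) ∈ ({u c, k (A c p'), k (B c p')} : Finset V) := h ▸ by simp
    simp only [Finset.mem_insert, Finset.mem_singleton] at h2
    have hpp : p = p' := by
      by_contra hne
      obtain ⟨q1, q2, q3, q4⟩ := hsame c p p' hne
      rcases h2 with h2 | h2 | h2
      · exact hku _ _ h2
      · exact q1 (hkinj h2)
      · exact q2 (hkinj h2)
    rw [hpp]
  refine ⟨Finset.image T Finset.univ, ⟨?_, ?_⟩, ?_, ?_⟩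
  · -- every member is a triangle
    intro t ht
    obtain ⟨cp, _, rfl⟩ := Finset.mem_image.mp ht
    obtain ⟨c, p⟩ := cp
    constructor
    · show ({u c, k (A c p), k (B c p)} : Finset V).card = 3
      rw [Finset.card_insert_of_notMem (humemT c p), Finset.card_pair (hkAB c p)]
    · intro a ha b hb hab
      simp only [hT, Finset.coe_insert, Set.mem_insert_iff, Finset.coe_singleton,
        Set.mem_singleton_iff] at ha hb
      have adjuk : ∀ i, G.Adj (u c) (k i) := fun i =>
        (hcomp _ (hkmem i) _ (humem c)).symm
      rcases ha with rfl | rfl | rfl <;> rcases hb with rfl | rfl | rfl <;>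
        first
          | exact absurd rfl hab
          | exact adjuk _
          | exact (adjuk _).symm
          | exact hK (hkmem _) (hkmem _) hab
  · -- edge-disjointness
    intro t1 ht1 t2 ht2 hne
    obtain ⟨⟨c, p⟩, _, rfl⟩ := Finset.mem_image.mp ht1
    obtain ⟨⟨c', p'⟩, _, rfl⟩ := Finset.mem_image.mp ht2
    simp only [hT]
    by_cases hcc : c = c'
    · subst hcc
      have hpp : p ≠ p' := by
        rintro rfl
        exact hne rfl
      obtain ⟨q1, q2, q3, q4⟩ := hsame c p p' hpp
      have hsub : ({u c, k (A c p), k (B c p)} : Finset V) ∩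
          {u c, k (A c p'), k (B c p')} ⊆ {u c} := by
        intro v hv
        simp only [Finset.mem_inter, Finset.mem_insert, Finset.mem_singleton] at hv ⊢
        obtain ⟨hv1, hv2⟩ := hv
        rcases hv1 with rfl | rfl | rfl
        · rfl
        · rcases hv2 with h | h | h
          · exact absurd h (hku _ _)
          · exact absurd (hkinj h) q1
          · exact absurd (hkinj h) q2
        · rcases hv2 with h | h | h
          · exact absurd h (hku _ _)
          · exact absurd (hkinj h) q3
          · exact absurd (hkinj h) q4
      calc (({u c, k (A c p), k (B c p)} : Finset V) ∩
          {u c, k (A c p'), k (B c p')}).card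
          ≤ ({u c} : Finset V).card := Finset.card_le_card hsub
        _ = 1 := Finset.card_singleton _
    · have hpairne : ({k (A c p), k (B c p)} : Finset V) ≠ {k (A c' p'), k (B c' p')} := by
        intro h
        apply hcc
        apply hcross c c' p p'
        rcases pair_eq_elim h with ⟨e1, e2⟩ | ⟨e1, e2⟩
        · rw [hkinj e1, hkinj e2]
        · rw [hkinj e1, hkinj e2, Finset.pair_comm]
      have hsub : ({u c, k (A c p), k (B c p)} : Finset V) ∩
          {u c', k (A c' p'), k (B c' p')} ⊆
          ({k (A c p), k (B c p)} : Finset V) ∩ {k (A c' p'), k (B c' p')} := by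
        intro v hv
        simp only [Finset.mem_inter, Finset.mem_insert, Finset.mem_singleton] at hv ⊢
        obtain ⟨hv1, hv2⟩ := hv
        constructor
        · rcases hv1 with rfl | rfl | rfl
          · rcases hv2 with h | h | h
            · exact absurd (huinj h) hcc
            · exact absurd h.symm (hku _ _)
            · exact absurd h.symm (hku _ _)
          · exact Or.inl rfl
          · exact Or.inr rfl
        · rcases hv2 with rfl | rfl | rfl
          · rcases hv1 with h | h | h
            · exact absurd (huinj h.symm) hcc
            · exact absurd h.symm (hku _ _)
            · exact absurd h.symm (hku _ _)
          · exact Or.inl rfl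
          · exact Or.inr rfl
      exact le_trans (Finset.card_le_card hsub)
        (pair_inter_card_le (Finset.card_pair (hkAB c p)) (Finset.card_pair (hkAB c' p'))
          hpairne)
  · -- inside K ∪ S
    intro t ht
    obtain ⟨⟨c, p⟩, _, rfl⟩ := Finset.mem_image.mp ht
    intro v hv
    simp only [hT, Finset.mem_insert, Finset.mem_singleton] at hv
    rcases hv with rfl | rfl | rfl
    · exact Finset.mem_union_right _ (humem c)
    · exact Finset.mem_union_left _ (hkmem _)
    · exact Finset.mem_union_left _ (hkmem _)
  · -- cardinality
    rw [Finset.card_image_of_injective _ hTinj, Finset.card_univ, Fintype.card_prod,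
      Fintype.card_fin, Fintype.card_fin]
end

section
/- Let K be a clique and S an independent set complete to each other with |S| ≥ |K|. Then there exists a triangle packing in K ∪ S of size binom(|K|,2). -/
open Finset

/-- If a clique `K` and an independent set `S` are complete to each other and `|S| ≥ |K|`,
then there is a triangle packing inside `K ∪ S` of size `|K| choose 2`. -/
theorem clique_indep_packing_large {V : Type*} [Fintype V] [DecidableEq V]
    (G : SimpleGraph V) (K S : Finset V)
    (hdisj : Disjoint K S)
    (hK : G.IsClique ↑K) (hS : ∀ u ∈ S, ∀ v ∈ S, ¬ G.Adj u v)
    (hcomp : ∀ u ∈ K, ∀ v ∈ S, G.Adj u v)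
    (hcard : K.card ≤ S.card) :
    ∃ P : Finset (Finset V), IsTrianglePacking G P ∧
      (∀ t ∈ P, t ⊆ K ∪ S) ∧ P.card = (K.card).choose 2 := by
  rcases Nat.lt_or_ge K.card 2 with hk | hk
  · refine ⟨∅, ⟨fun t ht => absurd ht (Finset.notMem_empty t),
      fun t₁ h₁ => absurd h₁ (Finset.notMem_empty t₁)⟩,
      fun t ht => absurd ht (Finset.notMem_empty t), ?_⟩
    simp [Nat.choose_eq_zero_of_lt hk]
  · have hkpos : 0 < K.card := by omega
    set a : Fin K.card → V := fun i => ((K.equivFin.symm i : K) : V) with ha_def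
    have haK : ∀ i, a i ∈ K := fun i => (K.equivFin.symm i).2
    have ha_inj : Function.Injective a := fun i j h =>
      K.equivFin.symm.injective (Subtype.ext h)
    set s : Fin K.card → V :=
      fun i => ((S.equivFin.symm (Fin.castLE hcard i) : S) : V) with hs_def
    have hsS : ∀ i, s i ∈ S := fun i => (S.equivFin.symm (Fin.castLE hcard i)).2
    have hs_inj : Function.Injective s := fun i j h =>
      Fin.castLE_injective hcard (S.equivFin.symm.injective (Subtype.ext h))
    have has : ∀ i j, a i ≠ s j := by
      intro i j h
      exact Finset.disjoint_left.mp hdisj (haK i) (h ▸ hsS j)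
    set color : Finset (Fin K.card) → Fin K.card :=
      fun t => ⟨(∑ i ∈ t, i.val) % K.card, Nat.mod_lt _ hkpos⟩ with hcolor_def
    set tri : Finset (Fin K.card) → Finset V :=
      fun t => insert (s (color t)) (t.image a) with htri_def
    have hmem_tri : ∀ t (x : V), x ∈ tri t ↔ x = s (color t) ∨ ∃ i ∈ t, a i = x := by
      intro t x
      simp [htri_def, Finset.mem_insert, Finset.mem_image]
    have htri_inj : ∀ t₁ t₂ : Finset (Fin K.card), t₁.card = 2 → t₂.card = 2 →
        tri t₁ = tri t₂ → t₁ = t₂ := by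
      have key : ∀ t₁ t₂ : Finset (Fin K.card), tri t₁ = tri t₂ → t₁ ⊆ t₂ := by
        intro t₁ t₂ h i hi
        have : a i ∈ tri t₂ := by
          rw [← h, hmem_tri]; exact Or.inr ⟨i, hi, rfl⟩
        rcases (hmem_tri t₂ (a i)).mp this with h1 | ⟨j, hj, hji⟩
        · exact absurd h1 (has i (color t₂))
        · exact (ha_inj hji) ▸ hj
      intro t₁ t₂ h1 h2 h
      exact Finset.Subset.antisymm (key _ _ h) (key _ _ h.symm)
    have hpair : ∀ t : Finset (Fin K.card), t.card = 2 → ∀ i ∈ t,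
        ∃ j, j ≠ i ∧ t = insert i {j} := by
      intro t ht i hi
      have h1 : (t.erase i).card = 1 := by
        rw [Finset.card_erase_of_mem hi, ht]
      obtain ⟨j, hj⟩ := Finset.card_eq_one.mp h1
      refine ⟨j, ?_, ?_⟩
      · have : j ∈ t.erase i := hj ▸ Finset.mem_singleton_self j
        exact (Finset.mem_erase.mp this).1
      · rw [← hj, Finset.insert_erase hi]
    have hcolor_eq : ∀ t₁ t₂ : Finset (Fin K.card), t₁.card = 2 → t₂.card = 2 →
        color t₁ = color t₂ → ∀ i, i ∈ t₁ → i ∈ t₂ → t₁ = t₂ := by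
      intro t₁ t₂ h1 h2 hc i hi1 hi2
      obtain ⟨j₁, hj₁ne, hj₁⟩ := hpair t₁ h1 i hi1
      obtain ⟨j₂, hj₂ne, hj₂⟩ := hpair t₂ h2 i hi2
      have hsum1 : (∑ x ∈ t₁, x.val) = i.val + j₁.val := by
        rw [hj₁, Finset.sum_insert (by simp [Ne.symm hj₁ne]), Finset.sum_singleton]
      have hsum2 : (∑ x ∈ t₂, x.val) = i.val + j₂.val := by
        rw [hj₂, Finset.sum_insert (by simp [Ne.symm hj₂ne]), Finset.sum_singleton]
      have hmod : (i.val + j₁.val) % K.card = (i.val + j₂.val) % K.card := by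
        have := congrArg Fin.val hc
        simpa [hcolor_def, hsum1, hsum2] using this
      have hvv : j₁.val % K.card = j₂.val % K.card := by
        have h' : (i.val + j₁.val) ≡ (i.val + j₂.val) [MOD K.card] := hmod
        exact Nat.ModEq.add_left_cancel' i.val h'
      have hj : j₁ = j₂ := by
        apply Fin.ext
        rwa [Nat.mod_eq_of_lt j₁.isLt, Nat.mod_eq_of_lt j₂.isLt] at hvv
      rw [hj₁, hj₂, hj]
    have htri_sub : ∀ t, tri t ⊆ K ∪ S := by
      intro t x hx
      rcases (hmem_tri t x).mp hx with h | ⟨i, _, hi⟩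
      · exact Finset.mem_union_right _ (h ▸ hsS (color t))
      · exact Finset.mem_union_left _ (hi ▸ haK i)
    set P : Finset (Finset V) :=
      (Finset.univ.powersetCard 2).image tri with hP_def
    have hmemP : ∀ t ∈ Finset.univ.powersetCard 2, (t : Finset (Fin K.card)).card = 2 :=
      fun t ht => (Finset.mem_powersetCard.mp ht).2
    refine ⟨P, ⟨?_, ?_⟩, ?_, ?_⟩
    · intro T hT
      obtain ⟨t, ht, rfl⟩ := Finset.mem_image.mp hT
      have ht2 := hmemP t ht
      constructor
      · have hnot : s (color t) ∉ t.image a := by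
          intro h
          obtain ⟨i, _, hi⟩ := Finset.mem_image.mp h
          exact has i (color t) hi
        rw [htri_def]
        simp only []
        rw [Finset.card_insert_of_notMem hnot, Finset.card_image_of_injective _ ha_inj, ht2]
      · intro x hx y hy hxy
        rcases (hmem_tri t x).mp hx with h1 | ⟨i, _, hi⟩ <;>
          rcases (hmem_tri t y).mp hy with h2 | ⟨j, _, hj⟩
        · exact absurd (h1.trans h2.symm) hxy
        · exact ((hcomp _ (hj ▸ haK j) _ (h1 ▸ hsS (color t))).symm)
        · exact hcomp _ (hi ▸ haK i) _ (h2 ▸ hsS (color t))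
        · exact hK (by exact_mod_cast hi ▸ haK i) (by exact_mod_cast hj ▸ haK j) hxy
    · intro T₁ hT₁ T₂ hT₂ hne
      obtain ⟨t₁, ht₁, rfl⟩ := Finset.mem_image.mp hT₁
      obtain ⟨t₂, ht₂, rfl⟩ := Finset.mem_image.mp hT₂
      have h1 := hmemP t₁ ht₁
      have h2 := hmemP t₂ ht₂
      have htne : t₁ ≠ t₂ := fun h => hne (h ▸ rfl)
      by_cases hc : color t₁ = color t₂
      · have hsub : tri t₁ ∩ tri t₂ ⊆ {s (color t₁)} := by
          intro x hx
          obtain ⟨hx1, hx2⟩ := Finset.mem_inter.mp hx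
          rcases (hmem_tri t₁ x).mp hx1 with e1 | ⟨i, hi, hix⟩
          · simpa using e1
          · rcases (hmem_tri t₂ x).mp hx2 with e2 | ⟨j, hj, hjx⟩
            · exact absurd (hix.trans e2) (has i (color t₂))
            · have hij : i = j := ha_inj (hix.trans hjx.symm)
              exact absurd (hcolor_eq t₁ t₂ h1 h2 hc i hi (hij ▸ hj)) htne
        calc (tri t₁ ∩ tri t₂).card ≤ ({s (color t₁)} : Finset V).card :=
              Finset.card_le_card hsub
          _ = 1 := Finset.card_singleton _
      · have hsub : tri t₁ ∩ tri t₂ ⊆ (t₁ ∩ t₂).image a := by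
          intro x hx
          obtain ⟨hx1, hx2⟩ := Finset.mem_inter.mp hx
          rcases (hmem_tri t₁ x).mp hx1 with e1 | ⟨i, hi, hix⟩
          · rcases (hmem_tri t₂ x).mp hx2 with e2 | ⟨j, hj, hjx⟩
            · exact absurd (hs_inj (e1.symm.trans e2)) hc
            · exact absurd (hjx.trans e1) (has j (color t₁))
          · rcases (hmem_tri t₂ x).mp hx2 with e2 | ⟨j, hj, hjx⟩
            · exact absurd (hix.trans e2) (has i (color t₂))
            · have hij : i = j := ha_inj (hix.trans hjx.symm)
              exact Finset.mem_image.mpr ⟨i, Finset.mem_inter.mpr ⟨hi, hij ▸ hj⟩, hix⟩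
        have hint : (t₁ ∩ t₂).card ≤ 1 := by
          by_contra h
          push_neg at h
          have hs1 : t₁ ∩ t₂ ⊆ t₁ := Finset.inter_subset_left
          have hs2 : t₁ ∩ t₂ ⊆ t₂ := Finset.inter_subset_right
          have he1 : t₁ ∩ t₂ = t₁ := Finset.eq_of_subset_of_card_le hs1 (by omega)
          have he2 : t₁ ∩ t₂ = t₂ := Finset.eq_of_subset_of_card_le hs2 (by omega)
          exact htne (he1 ▸ he2)
        calc (tri t₁ ∩ tri t₂).card ≤ ((t₁ ∩ t₂).image a).card :=
              Finset.card_le_card hsub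
          _ ≤ (t₁ ∩ t₂).card := Finset.card_image_le
          _ ≤ 1 := hint
    · intro T hT
      obtain ⟨t, _, rfl⟩ := Finset.mem_image.mp hT
      exact htri_sub t
    · rw [hP_def, Finset.card_image_of_injOn
        (fun t₁ ht₁ t₂ ht₂ h => htri_inj t₁ t₂ (hmemP t₁ ht₁) (hmemP t₂ ht₂) h),
        Finset.card_powersetCard, Finset.card_univ, Fintype.card_fin]
end

section
/- For every threshold graph G, the minimum size of a set of edges intersecting every triangle of G is at most twice the maximum size of a family of pairwise edge-disjoint triangles of G (i.e., Tuza's conjecture holds for threshold graphs). -/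
open Finset

/-!
Write `c 0, …, c (k-1)` for the clique side, with decreasing closed neighbourhoods, and split it at
`a` into `low a = {c i | i < a}` and `high a = {c i | a ≤ i}`. A triangle has at most one vertex on
the independent side, so the edges inside `low a`, inside `high a`, and between `high a` and the
independent side hit all triangles: at most `C(a,2) + highCost a` edges.

For the packing, colour the edges of the clique `low a` properly by `p + q mod a`. The vertices of
`high a` and the independent vertices adjacent to all of `low a` are common neighbours of `low a`;
giving each colour class its own such apex turns the edges of that class into edge-disjoint
triangles. Take `a` minimal with `highCost a ≤ C(a,2)`. With at least `a` apexes all `C(a,2)` edges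
are packed. Otherwise minimality forces exactly `a - 1` apexes and `highCost a ≤ C(a-1,2)`, and only
the class `p + q = a` is lost; it avoids `c 0`, so it has at most `(a-1)/2` edges.
-/

section TriangleHitting

variable {V : Type*} [DecidableEq V] {G : SimpleGraph V} [DecidableRel G.Adj]

theorem triTau_le_card [Fintype V] {H : Finset (Sym2 V)} (hH : IsTriangleHitting G H) :
    triTau G ≤ #H :=
  Nat.sInf_le ⟨H, hH, rfl⟩

theorem card_image_interedges_self_le (s : Finset V) :
    #((G.interedges s s).image Sym2.mk.uncurry) ≤ (#s).choose 2 := by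
  rw [← Sym2.card_image_offDiag]
  refine card_le_card (image_subset_image fun e he => ?_)
  obtain ⟨h₁, h₂, hadj⟩ := G.mem_interedges_iff.mp he
  exact mem_offDiag.mpr ⟨h₁, h₂, hadj.ne⟩

theorem exists_isTriangleHitting_card_le [Fintype V] (L M S : Finset V)
    (hcover : ∀ v, v ∈ L ∨ v ∈ M ∨ v ∈ S) (hS : ∀ x ∈ S, ∀ y ∈ S, ¬ G.Adj x y) :
    ∃ H, IsTriangleHitting G H ∧
      #H ≤ (#L).choose 2 + (#M).choose 2 + #(G.interedges M S) := by
  set E := G.interedges L L ∪ G.interedges M M ∪ G.interedges M S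
  have hE : ∀ {v w}, (v, w) ∈ E ↔ G.Adj v w ∧ (v ∈ L ∧ w ∈ L ∨ v ∈ M ∧ w ∈ M ∨ v ∈ M ∧ w ∈ S) := by
    intro v w
    simp only [E, mem_union, SimpleGraph.mk_mem_interedges_iff]
    tauto
  refine ⟨E.image Sym2.mk.uncurry, ⟨fun e he => ?_, ?_⟩, ?_⟩
  · obtain ⟨⟨v, w⟩, hvw, rfl⟩ := mem_image.mp he
    exact SimpleGraph.mem_edgeFinset.mpr (hE.mp hvw).1
  · rintro t ⟨ht, hclique⟩
    obtain ⟨x, y, z, hxy, hxz, hyz, rfl⟩ := card_eq_three.mp ht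
    -- a triangle has at most one vertex in `S`, so two of its vertices lie both in `L`, both in
    -- `M`, or one in `M` and one in `S`
    suffices ∃ v ∈ ({x, y, z} : Finset V), ∃ w ∈ ({x, y, z} : Finset V), (v, w) ∈ E by
      obtain ⟨v, hv, w, hw, hvw⟩ := this
      refine ⟨s(v, w), mem_image_of_mem _ hvw, fun u hu => ?_⟩
      rcases Sym2.mem_iff.mp hu with rfl | rfl <;> assumption
    have : G.Adj x y := hclique (by simp) (by simp) hxy
    have : G.Adj x z := hclique (by simp) (by simp) hxz
    have : G.Adj y z := hclique (by simp) (by simp) hyz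
    simp only [mem_insert, mem_singleton, exists_eq_or_imp, exists_eq_left, hE]
    rcases hcover x with hx | hx | hx <;> rcases hcover y with hy | hy | hy <;>
      rcases hcover z with hz | hz | hz <;> grind [SimpleGraph.Adj.symm]
  · calc #(E.image Sym2.mk.uncurry)
        ≤ #((G.interedges L L).image Sym2.mk.uncurry) +
            #((G.interedges M M).image Sym2.mk.uncurry) +
            #((G.interedges M S).image Sym2.mk.uncurry) := by
          simp only [E, image_union]
          exact (card_union_le _ _).trans (Nat.add_le_add_right (card_union_le _ _) _)
      _ ≤ _ := add_le_add (add_le_add (card_image_interedges_self_le L)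
          (card_image_interedges_self_le M)) card_image_le

end TriangleHitting

theorem Finset.exists_eq_pair_of_card_eq_two {α : Type*} [DecidableEq α] {s : Finset α} {x : α}
    (hs : #s = 2) (hx : x ∈ s) : ∃ y, x ≠ y ∧ s = {x, y} := by
  obtain ⟨p, q, hpq, rfl⟩ := card_eq_two.mp hs
  rcases mem_insert.mp hx with rfl | hx
  · exact ⟨q, hpq, rfl⟩
  · rw [mem_singleton.mp hx]
    exact ⟨p, hpq.symm, pair_comm _ _⟩

section Colouring

variable {a : ℕ}

/-- The colour `(p + q - 1) mod a` of the edge `{p, q}` of the complete graph on `Fin a`: a proper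
edge colouring, shifted so that the class avoiding vertex `0` gets the last colour `a - 1`. -/
def pairColour (e : Finset (Fin a)) : ℕ := (∑ i ∈ e, (i : ℕ) + (a - 1)) % a

def pairsColouredBelow (a N : ℕ) : Finset (Finset (Fin a)) :=
  {e ∈ powersetCard 2 univ | pairColour e < N}

theorem pairColour_pair {x y : Fin a} (hxy : x ≠ y) :
    pairColour {x, y} = ((x : ℕ) + y + (a - 1)) % a := by
  rw [pairColour, sum_pair hxy]

theorem disjoint_of_pairColour_eq {e e' : Finset (Fin a)} (he : #e = 2) (he' : #e' = 2)
    (hne : e ≠ e') (h : pairColour e = pairColour e') : Disjoint e e' := by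
  refine disjoint_left.mpr fun x hx hx' => hne ?_
  obtain ⟨y, hxy, rfl⟩ := exists_eq_pair_of_card_eq_two he hx
  obtain ⟨y', hxy', rfl⟩ := exists_eq_pair_of_card_eq_two he' hx'
  rw [pairColour_pair hxy, pairColour_pair hxy'] at h
  have hyy' : (y : ℕ) = y' :=
    ((Nat.ModEq.add_right_cancel' _ h).add_left_cancel' _).eq_of_lt_of_lt y.2 y'.2
  rw [Fin.ext hyy']

theorem pos_of_mem_of_pairColour_eq {e : Finset (Fin a)} (he : #e = 2)
    (h : pairColour e = a - 1) : ∀ p ∈ e, 0 < (p : ℕ) := by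
  intro p hp
  by_contra hp0
  obtain ⟨y, hpy, rfl⟩ := exists_eq_pair_of_card_eq_two he hp
  have hy : 0 < (y : ℕ) := Nat.pos_of_ne_zero fun hy0 => hpy (Fin.ext (by omega))
  have : ((p : ℕ) + y + (a - 1)) % a = y - 1 := by
    rw [show (p : ℕ) + y + (a - 1) = (y - 1) + a by omega, Nat.add_mod_right,
      Nat.mod_eq_of_lt (by omega)]
  rw [pairColour_pair hpy, this] at h
  omega

theorem two_mul_card_pairColour_eq_le :
    2 * #{e ∈ powersetCard 2 (univ : Finset (Fin a)) | pairColour e = a - 1} ≤ a - 1 := by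
  set B := {e ∈ powersetCard 2 (univ : Finset (Fin a)) | pairColour e = a - 1}
  have hB : ∀ e ∈ B, #e = 2 ∧ pairColour e = a - 1 := fun e he => by
    simpa [B, mem_powersetCard] using he
  have hdisj : (B : Set (Finset (Fin a))).PairwiseDisjoint id := fun e he e' he' hne =>
    disjoint_of_pairColour_eq (hB e he).1 (hB e' he').1 hne ((hB e he).2.trans (hB e' he').2.symm)
  calc 2 * #B = ∑ e ∈ B, #e := by
        rw [sum_congr rfl fun e he => (hB e he).1, sum_const, smul_eq_mul, mul_comm]
    _ = #(B.biUnion id) := (card_biUnion hdisj).symm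
    _ ≤ #(Ioo 0 a) := card_le_card_of_injOn Fin.val (fun p hp => by
        obtain ⟨e, he, hpe⟩ := mem_biUnion.mp hp
        exact mem_Ioo.mpr ⟨pos_of_mem_of_pairColour_eq (hB e he).1 (hB e he).2 p hpe, p.2⟩)
        Fin.val_injective.injOn
    _ = a - 1 := Nat.card_Ioo 0 a

theorem card_pairsColouredBelow_of_le {N : ℕ} (h : a ≤ N) :
    #(pairsColouredBelow a N) = a.choose 2 := by
  rw [pairsColouredBelow, filter_true_of_mem, card_powersetCard, card_univ, Fintype.card_fin]
  intro e he
  obtain ⟨p, -⟩ := card_pos.mp (by rw [(mem_powersetCard.mp he).2]; norm_num)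
  exact (Nat.mod_lt _ p.pos).trans_le h

theorem choose_two_add_choose_two_pred_le :
    a.choose 2 + (a - 1).choose 2 ≤ 2 * #(pairsColouredBelow a (a - 1)) := by
  have hsplit := card_filter_add_card_filter_not (s := powersetCard 2 (univ : Finset (Fin a)))
    (fun e => pairColour e < a - 1)
  rw [card_powersetCard, card_univ, Fintype.card_fin] at hsplit
  have hrest : #{e ∈ powersetCard 2 (univ : Finset (Fin a)) | ¬ pairColour e < a - 1} ≤
      #{e ∈ powersetCard 2 (univ : Finset (Fin a)) | pairColour e = a - 1} := by
    refine card_le_card (monotone_filter_right _ fun e he hlt => ?_)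
    obtain ⟨p, -⟩ := card_pos.mp (by rw [(mem_powersetCard.mp he).2]; norm_num)
    have := Nat.mod_lt (∑ i ∈ e, (i : ℕ) + (a - 1)) p.pos
    simp only [pairColour] at hlt ⊢
    omega
  have hchoose : a.choose 2 = (a - 1).choose 2 + (a - 1) := by
    rcases a with _ | a
    · rfl
    · simp [Nat.choose_succ_succ', add_comm]
  have := two_mul_card_pairColour_eq_le (a := a)
  rw [pairsColouredBelow]
  omega

end Colouring

theorem SimpleGraph.injective_of_adj {V ι : Type*} {G : SimpleGraph V} {c : ι → V}
    (hc : ∀ p q, p ≠ q → G.Adj (c p) (c q)) : Function.Injective c :=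
  fun p q h => by_contra fun hpq => (hc p q hpq).ne h

section TrianglePacking

variable {V : Type*} [DecidableEq V] {G : SimpleGraph V} {a : ℕ} {c : Fin a → V}

theorem card_le_triMu [Fintype V] {P : Finset (Finset V)} (hP : IsTrianglePacking G P) :
    #P ≤ triMu G :=
  le_csSup ⟨Fintype.card (Finset V), by rintro _ ⟨Q, -, rfl⟩; exact card_le_univ Q⟩ ⟨P, hP, rfl⟩

theorem isTriangle_insert_image (hc : ∀ p q, p ≠ q → G.Adj (c p) (c q)) {e : Finset (Fin a)}
    (he : #e = 2) {w : V} (hw : ∀ p, G.Adj w (c p)) : IsTriangle G (insert w (e.image c)) := by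
  refine ⟨?_, ?_⟩
  · rw [card_insert_of_notMem, card_image_of_injective _ (G.injective_of_adj hc), he]
    simp only [mem_image, not_exists, not_and]
    exact fun p _ h => (hw p).ne h.symm
  · rw [coe_insert, SimpleGraph.isClique_insert]
    refine ⟨?_, ?_⟩
    · rw [coe_image]
      rintro _ ⟨p, -, rfl⟩ _ ⟨q, -, rfl⟩ hne
      exact hc p q fun h => hne (h ▸ rfl)
    · intro v hv _
      obtain ⟨p, -, rfl⟩ := mem_image.mp (mem_coe.mp hv)
      exact hw p

theorem card_insert_image_inter_le_one (hc : Function.Injective c) {e e' : Finset (Fin a)}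
    (he : #e = 2) (he' : #e' = 2) (hne : e ≠ e') {w w' : V} (hw : ∀ p, w ≠ c p)
    (hw' : ∀ p, w' ≠ c p) (hdisj : w = w' → Disjoint e e') :
    #(insert w (e.image c) ∩ insert w' (e'.image c)) ≤ 1 := by
  have hsub : insert w (e.image c) ∩ insert w' (e'.image c) ⊆ ({w} ∩ {w'}) ∪ (e ∩ e').image c := by
    intro v hv
    simp only [mem_inter, mem_insert, mem_image] at hv
    simp only [mem_union, mem_inter, mem_singleton, mem_image]
    rcases hv with ⟨rfl | ⟨p, hp, rfl⟩, rfl | ⟨q, hq, hqp⟩⟩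
    · exact Or.inl ⟨rfl, rfl⟩
    · exact absurd hqp.symm (hw q)
    · exact absurd rfl (hw' p)
    · exact Or.inr ⟨p, ⟨hp, hc hqp ▸ hq⟩, rfl⟩
  refine (card_le_card hsub).trans ((card_union_le _ _).trans ?_)
  by_cases hww' : w = w'
  · rw [disjoint_iff_inter_eq_empty.mp (hdisj hww'), image_empty, card_empty, add_zero]
    exact (card_le_card inter_subset_left).trans (card_singleton w).le
  · have hee' : #(e ∩ e') ≤ 1 := by
      by_contra! h
      exact hne ((eq_of_subset_of_card_le inter_subset_left (by omega)).symm.trans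
        (eq_of_subset_of_card_le inter_subset_right (by omega)))
    rw [singleton_inter_of_notMem (by simpa using hww'), card_empty, zero_add]
    exact card_image_le.trans hee'

theorem isTrianglePacking_image_insert (hc : ∀ p q, p ≠ q → G.Adj (c p) (c q))
    {Q : Finset (Finset (Fin a))} (hQ : ∀ e ∈ Q, #e = 2) {w : Finset (Fin a) → V}
    (hw : ∀ e ∈ Q, ∀ p, G.Adj (w e) (c p))
    (hdisj : ∀ e ∈ Q, ∀ e' ∈ Q, e ≠ e' → w e = w e' → Disjoint e e') :
    IsTrianglePacking G (Q.image fun e => insert (w e) (e.image c)) ∧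
      #(Q.image fun e => insert (w e) (e.image c)) = #Q := by
  have hinter : ∀ e ∈ Q, ∀ e' ∈ Q, e ≠ e' →
      #(insert (w e) (e.image c) ∩ insert (w e') (e'.image c)) ≤ 1 :=
    fun e he e' he' hne => card_insert_image_inter_le_one (G.injective_of_adj hc) (hQ e he)
      (hQ e' he') hne (fun p => (hw e he p).ne) (fun p => (hw e' he' p).ne) (hdisj e he e' he' hne)
  refine ⟨⟨?_, ?_⟩, card_image_of_injOn fun e he e' he' heq => by_contra fun hne => ?_⟩
  · simp only [mem_image]
    rintro _ ⟨e, he, rfl⟩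
    exact isTriangle_insert_image hc (hQ e he) (hw e he)
  · simp only [mem_image]
    rintro _ ⟨e, he, rfl⟩ _ ⟨e', he', rfl⟩ hne
    exact hinter e he e' he' fun h => hne (h ▸ rfl)
  · have := hinter e he e' he' hne
    rw [← heq, inter_self, (isTriangle_insert_image hc (hQ e he) (hw e he)).1] at this
    omega

theorem exists_isTrianglePacking_card_eq (hc : ∀ p q, p ≠ q → G.Adj (c p) (c q))
    (Z : Finset V) (hZ : ∀ z ∈ Z, ∀ p, G.Adj z (c p)) :
    ∃ P, IsTrianglePacking G P ∧ #P = #(pairsColouredBelow a #Z) := by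
  rcases isEmpty_or_nonempty V with hV | hV
  · have : IsEmpty (Fin a) := c.isEmpty
    refine ⟨∅, ⟨by simp, by simp⟩, ?_⟩
    rw [pairsColouredBelow, powersetCard_eq_empty.mpr (by simp), filter_empty, card_empty,
      card_empty]
  let z : ℕ → V := fun r => if h : r < #Z then Z.equivFin.symm ⟨r, h⟩ else Classical.arbitrary V
  have hzZ : ∀ r < #Z, z r ∈ Z := fun r h => by simp [z, h]
  have hzinj : ∀ r < #Z, ∀ r' < #Z, z r = z r' → r = r' := fun r h r' h' hrr' => by
    simpa [z, h, h', Subtype.ext_iff] using hrr'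
  have hQ : ∀ e ∈ pairsColouredBelow a #Z, #e = 2 ∧ pairColour e < #Z := fun e he => by
    simpa [pairsColouredBelow, mem_powersetCard] using he
  obtain ⟨hP, hcard⟩ := isTrianglePacking_image_insert hc (fun e he => (hQ e he).1)
    (w := fun e => z (pairColour e)) (fun e he => hZ _ (hzZ _ (hQ e he).2))
    fun e he e' he' hne hzz => disjoint_of_pairColour_eq (hQ e he).1 (hQ e' he').1 hne
      (hzinj _ (hQ e he).2 _ (hQ e' he').2 hzz)
  exact ⟨_, hP, hcard⟩

end TrianglePacking

theorem Nat.choose_two_add_mul_le (x m : ℕ) : x.choose 2 + x * m ≤ (x + m).choose 2 := by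
  induction m with
  | zero => simp
  | succ m ih =>
    have h : (x + m + 1).choose 2 = x + m + (x + m).choose 2 := by
      rw [Nat.choose_succ_succ', Nat.choose_one_right]
    rw [← add_assoc, h, mul_add_one]
    omega

namespace ThresholdRep

section Order

variable {V : Type*} {G : SimpleGraph V} (R : ThresholdRep G)

theorem closedNbhd_antitone :
    Antitone fun i => (insert (R.c i) (G.neighborSet (R.c i)) : Set V) := by
  intro p i hpi
  obtain ⟨n, hn⟩ := Nat.exists_eq_add_of_le (Fin.le_def.mp hpi)
  induction n generalizing i with
  | zero => rw [Fin.ext hn]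
  | succ n ih =>
    have hlt : (p : ℕ) + n < R.k := by omega
    rw [show i = ⟨(p : ℕ) + n + 1, by omega⟩ from Fin.ext hn]
    exact (R.nestedK ⟨(p : ℕ) + n, hlt⟩ _).trans
      (ih (i := ⟨(p : ℕ) + n, hlt⟩) (Fin.le_def.mpr (Nat.le_add_right _ _)) rfl)

theorem adj_of_le (j : Fin R.s) {p i : Fin R.k} (hpi : p ≤ i) (h : G.Adj (R.c i) (R.u j)) :
    G.Adj (R.c p) (R.u j) := by
  rcases R.closedNbhd_antitone hpi (Set.mem_insert_of_mem _ h) with heq | hadj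
  · exact absurd heq.symm (R.disj p j)
  · exact hadj

end Order

variable {V : Type*} [DecidableEq V] {G : SimpleGraph V} (R : ThresholdRep G)

def low (a : ℕ) : Finset V := ({i | (i : ℕ) < a} : Finset (Fin R.k)).image R.c

def high (a : ℕ) : Finset V := ({i | a ≤ (i : ℕ)} : Finset (Fin R.k)).image R.c

def indepSide : Finset V := univ.image R.u

theorem card_low_le (a : ℕ) : #(R.low a) ≤ a := by
  rw [low, card_image_of_injective _ R.inj_c, Fin.card_filter_val_lt]
  exact min_le_right _ _

theorem card_high (a : ℕ) : #(R.high a) = R.k - a := by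
  have hsplit := card_filter_add_card_filter_not (s := (univ : Finset (Fin R.k))) (· < a)
  rw [Fin.card_filter_val_lt, card_univ, Fintype.card_fin] at hsplit
  rw [high, card_image_of_injective _ R.inj_c]
  simp only [not_lt] at hsplit
  omega

theorem mem_low_or_mem_high_or_mem_indepSide (a : ℕ) (v : V) :
    v ∈ R.low a ∨ v ∈ R.high a ∨ v ∈ R.indepSide := by
  rcases R.cover v with ⟨i, rfl⟩ | ⟨j, rfl⟩
  · rcases lt_or_ge (i : ℕ) a with h | h
    · exact Or.inl (mem_image_of_mem _ (by simpa using h))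
    · exact Or.inr (Or.inl (mem_image_of_mem _ (by simpa using h)))
  · exact Or.inr (Or.inr (mem_image_of_mem _ (mem_univ j)))

theorem not_adj_of_mem_indepSide {x y : V} (hx : x ∈ R.indepSide) (hy : y ∈ R.indepSide) :
    ¬ G.Adj x y := by
  obtain ⟨i, -, rfl⟩ := mem_image.mp hx
  obtain ⟨j, -, rfl⟩ := mem_image.mp hy
  exact R.indep i j

variable [DecidableRel G.Adj]

def joinedToLow (a : ℕ) : Finset V := {y ∈ R.indepSide | ∀ x ∈ R.low a, G.Adj x y}

theorem joinedToLow_antitone : Antitone R.joinedToLow := fun a b hab =>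
  monotone_filter_right _ fun y _ hy x hx => hy x <| by
    obtain ⟨i, hi, rfl⟩ := mem_image.mp hx
    exact mem_image_of_mem _ (by simp only [mem_filter, mem_univ, true_and] at hi ⊢; omega)

theorem mem_joinedToLow_of_adj {b : ℕ} {x y : V} (hx : x ∈ R.high b) (hy : y ∈ R.indepSide)
    (hxy : G.Adj x y) : y ∈ R.joinedToLow (b + 1) := by
  obtain ⟨i, hi, rfl⟩ := mem_image.mp hx
  obtain ⟨j, -, rfl⟩ := mem_image.mp hy
  refine mem_filter.mpr ⟨hy, fun x hx => ?_⟩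
  obtain ⟨p, hp, rfl⟩ := mem_image.mp hx
  simp only [mem_filter, mem_univ, true_and] at hi hp
  exact R.adj_of_le j (Fin.le_def.mpr (by omega)) hxy

theorem card_interedges_high_le (b : ℕ) :
    #(G.interedges (R.high b) R.indepSide) ≤ (R.k - b) * #(R.joinedToLow (b + 1)) := by
  calc #(G.interedges (R.high b) R.indepSide)
      ≤ #(R.high b ×ˢ R.joinedToLow (b + 1)) := card_le_card fun e he => by
        obtain ⟨hx, hy, hxy⟩ := G.mem_interedges_iff.mp he
        exact mem_product.mpr ⟨hx, R.mem_joinedToLow_of_adj hx hy hxy⟩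
    _ = (R.k - b) * #(R.joinedToLow (b + 1)) := by rw [card_product, card_high]

theorem card_high_union_joinedToLow (a : ℕ) :
    #(R.high a ∪ R.joinedToLow a) = R.k - a + #(R.joinedToLow a) := by
  rw [card_union_of_disjoint, card_high]
  refine disjoint_left.mpr fun v hv hv' => ?_
  obtain ⟨i, -, rfl⟩ := mem_image.mp hv
  obtain ⟨j, -, hj⟩ := mem_image.mp (mem_filter.mp hv').1
  exact R.disj i j hj.symm

/-- Bounds the hitting edges inside `R.high b` and between `R.high b` and the independent side. -/
def highCost (b : ℕ) : ℕ := (R.k - b).choose 2 + (R.k - b) * #(R.joinedToLow (b + 1))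

theorem highCost_le (b : ℕ) :
    R.highCost b ≤ (R.k - b + #(R.joinedToLow (b + 1))).choose 2 :=
  Nat.choose_two_add_mul_le _ _

theorem exists_isTriangleHitting_card_le [Fintype V] (a : ℕ) :
    ∃ H, IsTriangleHitting G H ∧ #H ≤ a.choose 2 + R.highCost a := by
  obtain ⟨H, hH, hcard⟩ := _root_.exists_isTriangleHitting_card_le (R.low a) (R.high a)
    R.indepSide (R.mem_low_or_mem_high_or_mem_indepSide a) fun x hx y hy =>
      R.not_adj_of_mem_indepSide hx hy
  refine ⟨H, hH, hcard.trans ?_⟩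
  rw [highCost, card_high, ← add_assoc]
  gcongr
  exacts [R.card_low_le a, R.card_interedges_high_le a]

theorem exists_isTrianglePacking_card_eq {a : ℕ} (ha : a ≤ R.k) :
    ∃ P, IsTrianglePacking G P ∧
      #P = #(pairsColouredBelow a (R.k - a + #(R.joinedToLow a))) := by
  rw [← card_high_union_joinedToLow]
  refine _root_.exists_isTrianglePacking_card_eq (c := fun p => R.c (Fin.castLE ha p))
    (fun p q hpq => R.clique _ _ fun h => hpq (Fin.castLE_injective ha h)) _ fun z hz p => ?_
  rcases mem_union.mp hz with hz | hz
  · obtain ⟨i, hi, rfl⟩ := mem_image.mp hz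
    refine R.clique _ _ fun h => ?_
    simp only [mem_filter, mem_univ, true_and] at hi
    have := congrArg Fin.val h
    simp only [Fin.val_castLE] at this
    omega
  · exact ((mem_filter.mp hz).2 _ (mem_image_of_mem _ (by simp))).symm

theorem exists_isTriangleHitting_isTrianglePacking_card_le_two_mul [Fintype V]
    (R : ThresholdRep G) :
    ∃ H P, IsTriangleHitting G H ∧ IsTrianglePacking G P ∧ #H ≤ 2 * #P := by
  have hk : ∃ b, R.highCost b ≤ b.choose 2 := ⟨R.k, by simp [highCost]⟩
  set a := Nat.find hk
  have hcost : R.highCost a ≤ a.choose 2 := Nat.find_spec hk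
  have hak : a ≤ R.k := Nat.find_min' hk (by simp [highCost])
  obtain ⟨H, hH, hHcard⟩ := R.exists_isTriangleHitting_card_le a
  obtain ⟨P, hP, hPcard⟩ := R.exists_isTrianglePacking_card_eq hak
  refine ⟨H, P, hH, hP, ?_⟩
  set n := R.k - a + #(R.joinedToLow a)
  rcases le_or_gt a n with han | han
  · rw [hPcard, card_pairsColouredBelow_of_le han]
    omega
  -- by minimality of `a`, only the last colour class lacks an apex
  have hn : n = a - 1 := by
    by_contra hne
    refine Nat.find_min hk (show a - 1 < a by omega) ?_
    calc R.highCost (a - 1) ≤ (R.k - (a - 1) + #(R.joinedToLow (a - 1 + 1))).choose 2 :=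
          R.highCost_le _
      _ = (n + 1).choose 2 := by rw [Nat.sub_add_cancel (by omega)]; congr 1; omega
      _ ≤ (a - 1).choose 2 := Nat.choose_le_choose 2 (by omega)
  have hhigh : R.highCost a ≤ (a - 1).choose 2 :=
    calc R.highCost a ≤ (R.k - a + #(R.joinedToLow (a + 1))).choose 2 := R.highCost_le a
      _ ≤ (a - 1).choose 2 := Nat.choose_le_choose 2 (by
          have := card_le_card (R.joinedToLow_antitone (Nat.le_add_right a 1))
          omega)
  have := choose_two_add_choose_two_pred_le (a := a)
  rw [hPcard, hn]
  omega

end ThresholdRep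

/-- Tuza's conjecture holds for threshold graphs: `τ(G) ≤ 2 μ(G)`. -/
theorem tuza_threshold {V : Type*} [Fintype V] [DecidableEq V]
    (G : SimpleGraph V) [DecidableRel G.Adj]
    (h : Nonempty (ThresholdRep G)) :
    triTau G ≤ 2 * triMu G := by
  obtain ⟨R⟩ := h
  obtain ⟨H, P, hH, hP, hHP⟩ := R.exists_isTriangleHitting_isTrianglePacking_card_le_two_mul
  calc triTau G ≤ #H := triTau_le_card hH
    _ ≤ 2 * #P := hHP
    _ ≤ 2 * triMu G := Nat.mul_le_mul_left 2 (card_le_triMu hP)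
end

section
/- Let G be a threshold graph with representation (K, S) where K = {c_1,...,c_k}, k even, c_k has no neighbour in S, and let X = {u ∈ S : {c_1,...,c_{k/2}} ⊆ N(u)}. If |X| ≥ k/2, then G contains a triangle packing of size 2·binom(k/2, 2). -/
open Finset

lemma pack_aux {V : Type*} [DecidableEq V] (G : SimpleGraph V) (h : ℕ) (hh : 0 < h)
    (cb ct w : Fin h → V)
    (icb : Function.Injective cb) (ict : Function.Injective ct) (iw : Function.Injective w)
    (dbt : ∀ a b, cb a ≠ ct b) (dbw : ∀ a b, cb a ≠ w b) (dtw : ∀ a b, ct a ≠ w b)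
    (abb : ∀ a b, a ≠ b → G.Adj (cb a) (cb b))
    (att : ∀ a b, a ≠ b → G.Adj (ct a) (ct b))
    (abt : ∀ a b, G.Adj (cb a) (ct b))
    (abw : ∀ a b, G.Adj (cb a) (w b)) :
    ∃ P : Finset (Finset V), IsTrianglePacking G P ∧ P.card = 2 * h.choose 2 := by
  classical
  set E : Finset (Finset (Fin h)) := Finset.univ.powersetCard 2 with hE
  have hEcard : ∀ s ∈ E, s.card = 2 := fun s hs => (Finset.mem_powersetCard.mp hs).2
  set col : Finset (Fin h) → Fin h :=
    fun s => ⟨(∑ a ∈ s, a.val) % h, Nat.mod_lt _ hh⟩ with hcol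
  set T1 : Finset (Fin h) → Finset V := fun s => insert (w (col s)) (s.image cb) with hT1
  set T2 : Finset (Fin h) → Finset V := fun s => insert (cb (col s)) (s.image ct) with hT2
  have pair : ∀ s ∈ E, ∀ a ∈ s, ∃ b, a ≠ b ∧ s = {a, b} := by
    intro s hs a has
    obtain ⟨p, q, hpq, rfl⟩ := Finset.card_eq_two.mp (hEcard s hs)
    rcases Finset.mem_insert.mp has with rfl | hq
    · exact ⟨q, hpq, rfl⟩
    · rcases Finset.mem_singleton.mp hq with rfl
      exact ⟨p, Ne.symm hpq, by rw [Finset.pair_comm]⟩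
  have key : ∀ s ∈ E, ∀ s' ∈ E, col s = col s' → ∀ a, a ∈ s → a ∈ s' → s = s' := by
    intro s hs s' hs' hc a has has'
    obtain ⟨b, hab, rfl⟩ := pair s hs a has
    obtain ⟨b', hab', rfl⟩ := pair s' hs' a has'
    have hmod : (a.val + b.val) % h = (a.val + b'.val) % h := by
      have := congrArg Fin.val hc
      simpa [hcol, Finset.sum_pair hab, Finset.sum_pair hab'] using this
    have hbb : b.val = b'.val := by
      have := Nat.ModEq.add_left_cancel' a.val hmod
      rwa [Nat.ModEq, Nat.mod_eq_of_lt b.2, Nat.mod_eq_of_lt b'.2] at this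
    rw [Fin.val_injective hbb]
  have uniq : ∀ s ∈ E, ∀ s' ∈ E, s ≠ s' →
      ∀ a a', a ∈ s → a ∈ s' → a' ∈ s → a' ∈ s' → a = a' := by
    intro s hs s' hs' hne a a' h1 h2 h3 h4
    by_contra hne'
    have hsub : ({a, a'} : Finset (Fin h)) ⊆ s := by
      intro x hx
      rcases Finset.mem_insert.mp hx with rfl | hx
      · exact h1
      · exact (Finset.mem_singleton.mp hx) ▸ h3
    have hsub' : ({a, a'} : Finset (Fin h)) ⊆ s' := by
      intro x hx
      rcases Finset.mem_insert.mp hx with rfl | hx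
      · exact h2
      · exact (Finset.mem_singleton.mp hx) ▸ h4
    have e1 : ({a, a'} : Finset (Fin h)) = s :=
      Finset.eq_of_subset_of_card_le hsub (by rw [hEcard s hs, Finset.card_pair hne'])
    have e2 : ({a, a'} : Finset (Fin h)) = s' :=
      Finset.eq_of_subset_of_card_le hsub' (by rw [hEcard s' hs', Finset.card_pair hne'])
    exact hne (e1 ▸ e2)
  have memT1 : ∀ s v, v ∈ T1 s ↔ v = w (col s) ∨ ∃ a ∈ s, cb a = v := by
    intro s v; simp [hT1]
  have memT2 : ∀ s v, v ∈ T2 s ↔ v = cb (col s) ∨ ∃ a ∈ s, ct a = v := by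
    intro s v; simp [hT2]
  have class1 : ∀ s s' v, v ∈ T1 s → v ∈ T1 s' →
      (v = w (col s) ∧ col s = col s') ∨ (∃ a, a ∈ s ∧ a ∈ s' ∧ v = cb a) := by
    intro s s' v hv hv'
    rcases (memT1 s v).mp hv with rfl | ⟨a, ha, rfl⟩
    · rcases (memT1 s' _).mp hv' with he | ⟨a', ha', he⟩
      · exact Or.inl ⟨rfl, iw he⟩
      · exact absurd he (dbw a' _)
    · rcases (memT1 s' _).mp hv' with he | ⟨a', ha', he⟩
      · exact absurd he (dbw a _)
      · exact Or.inr ⟨a, ha, (icb he) ▸ ha', rfl⟩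
  have class2 : ∀ s s' v, v ∈ T2 s → v ∈ T2 s' →
      (v = cb (col s) ∧ col s = col s') ∨ (∃ a, a ∈ s ∧ a ∈ s' ∧ v = ct a) := by
    intro s s' v hv hv'
    rcases (memT2 s v).mp hv with rfl | ⟨a, ha, rfl⟩
    · rcases (memT2 s' _).mp hv' with he | ⟨a', ha', he⟩
      · exact Or.inl ⟨rfl, icb he⟩
      · exact absurd he.symm (dbt _ a')
    · rcases (memT2 s' _).mp hv' with he | ⟨a', ha', he⟩
      · exact absurd he.symm (dbt _ a)
      · exact Or.inr ⟨a, ha, (ict he) ▸ ha', rfl⟩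
  have claimA : ∀ s ∈ E, ∀ s' ∈ E, s ≠ s' → (T1 s ∩ T1 s').card ≤ 1 := by
    intro s hs s' hs' hne
    rw [Finset.card_le_one]
    intro v hv v' hv'
    obtain ⟨hv1, hv2⟩ := Finset.mem_inter.mp hv
    obtain ⟨hv1', hv2'⟩ := Finset.mem_inter.mp hv'
    rcases class1 s s' v hv1 hv2 with ⟨rfl, hc⟩ | ⟨a, ha, ha', rfl⟩
    · rcases class1 s s' v' hv1' hv2' with ⟨rfl, _⟩ | ⟨a', hb, hb', rfl⟩
      · rfl
      · exact absurd (key s hs s' hs' hc a' hb hb') hne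
    · rcases class1 s s' v' hv1' hv2' with ⟨rfl, hc⟩ | ⟨a', hb, hb', rfl⟩
      · exact absurd (key s hs s' hs' hc a ha ha') hne
      · rw [uniq s hs s' hs' hne a a' ha ha' hb hb']
  have claimB : ∀ s ∈ E, ∀ s' ∈ E, s ≠ s' → (T2 s ∩ T2 s').card ≤ 1 := by
    intro s hs s' hs' hne
    rw [Finset.card_le_one]
    intro v hv v' hv'
    obtain ⟨hv1, hv2⟩ := Finset.mem_inter.mp hv
    obtain ⟨hv1', hv2'⟩ := Finset.mem_inter.mp hv'
    rcases class2 s s' v hv1 hv2 with ⟨rfl, hc⟩ | ⟨a, ha, ha', rfl⟩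
    · rcases class2 s s' v' hv1' hv2' with ⟨rfl, _⟩ | ⟨a', hb, hb', rfl⟩
      · rfl
      · exact absurd (key s hs s' hs' hc a' hb hb') hne
    · rcases class2 s s' v' hv1' hv2' with ⟨rfl, hc⟩ | ⟨a', hb, hb', rfl⟩
      · exact absurd (key s hs s' hs' hc a ha ha') hne
      · rw [uniq s hs s' hs' hne a a' ha ha' hb hb']
  have claimC : ∀ s s', (T1 s ∩ T2 s').card ≤ 1 := by
    intro s s'
    rw [Finset.card_le_one]
    intro v hv v' hv'
    obtain ⟨hv1, hv2⟩ := Finset.mem_inter.mp hv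
    obtain ⟨hv1', hv2'⟩ := Finset.mem_inter.mp hv'
    have get : ∀ x, x ∈ T1 s → x ∈ T2 s' → x = cb (col s') := by
      intro x hx hx'
      rcases (memT1 s x).mp hx with rfl | ⟨a, _, rfl⟩
      · rcases (memT2 s' _).mp hx' with he | ⟨a', _, he⟩
        · exact absurd he.symm (dbw _ _)
        · exact absurd he (dtw a' _)
      · rcases (memT2 s' _).mp hx' with he | ⟨a', _, he⟩
        · exact he
        · exact absurd he (fun e => dbt a a' e.symm)
    rw [get v hv1 hv2, get v' hv1' hv2']
  have tri1 : ∀ s ∈ E, IsTriangle G (T1 s) := by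
    intro s hs
    constructor
    · obtain ⟨p, q, hpq, rfl⟩ := Finset.card_eq_two.mp (hEcard s hs)
      have h2 : w (col {p, q}) ∉ ({p, q} : Finset (Fin h)).image cb := by
        simp only [Finset.mem_image]
        rintro ⟨a, _, ha⟩
        exact dbw a _ ha
      simp only [hT1]
      rw [Finset.card_insert_of_notMem h2, Finset.card_image_of_injective _ icb,
        Finset.card_pair hpq]
    · intro v hv v' hv' hne
      rw [Finset.mem_coe] at hv hv'
      rcases (memT1 s v).mp hv with rfl | ⟨a, _, rfl⟩ <;>
        rcases (memT1 s v').mp hv' with rfl | ⟨b, _, rfl⟩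
      · exact absurd rfl hne
      · exact (abw b _).symm
      · exact abw a _
      · exact abb a b fun e => hne (congrArg cb e)
  have tri2 : ∀ s ∈ E, IsTriangle G (T2 s) := by
    intro s hs
    constructor
    · obtain ⟨p, q, hpq, rfl⟩ := Finset.card_eq_two.mp (hEcard s hs)
      have h2 : cb (col {p, q}) ∉ ({p, q} : Finset (Fin h)).image ct := by
        simp only [Finset.mem_image]
        rintro ⟨a, _, ha⟩
        exact dbt _ a ha.symm
      simp only [hT2]
      rw [Finset.card_insert_of_notMem h2, Finset.card_image_of_injective _ ict,
        Finset.card_pair hpq]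
    · intro v hv v' hv' hne
      rw [Finset.mem_coe] at hv hv'
      rcases (memT2 s v).mp hv with rfl | ⟨a, _, rfl⟩ <;>
        rcases (memT2 s v').mp hv' with rfl | ⟨b, _, rfl⟩
      · exact absurd rfl hne
      · exact abt _ b
      · exact (abt _ a).symm
      · exact att a b fun e => hne (congrArg ct e)
  have injT1 : Set.InjOn T1 ↑E := by
    intro s hs s' hs' he
    by_contra hne
    have h1 := claimA s (Finset.mem_coe.mp hs) s' (Finset.mem_coe.mp hs') hne
    rw [he, Finset.inter_self] at h1
    have h3 := (tri1 s' (Finset.mem_coe.mp hs')).1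
    omega
  have injT2 : Set.InjOn T2 ↑E := by
    intro s hs s' hs' he
    by_contra hne
    have h1 := claimB s (Finset.mem_coe.mp hs) s' (Finset.mem_coe.mp hs') hne
    rw [he, Finset.inter_self] at h1
    have h3 := (tri2 s' (Finset.mem_coe.mp hs')).1
    omega
  have hdisj : Disjoint (E.image T1) (E.image T2) := by
    rw [Finset.disjoint_left]
    intro t ht ht'
    obtain ⟨s, hs, rfl⟩ := Finset.mem_image.mp ht
    obtain ⟨s', hs', he⟩ := Finset.mem_image.mp ht'
    have h1 := claimC s s'
    rw [he, Finset.inter_self] at h1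
    have h3 := (tri1 s hs).1
    omega
  refine ⟨E.image T1 ∪ E.image T2, ⟨?_, ?_⟩, ?_⟩
  · intro t ht
    rcases Finset.mem_union.mp ht with ht | ht <;>
        obtain ⟨s, hs, rfl⟩ := Finset.mem_image.mp ht
    · exact tri1 s hs
    · exact tri2 s hs
  · intro t1 ht1 t2 ht2 hne
    rcases Finset.mem_union.mp ht1 with h1 | h1 <;>
        rcases Finset.mem_union.mp ht2 with h2 | h2 <;>
        obtain ⟨s, hs, rfl⟩ := Finset.mem_image.mp h1 <;>
        obtain ⟨s', hs', rfl⟩ := Finset.mem_image.mp h2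
    · exact claimA s hs s' hs' fun e => hne (congrArg T1 e)
    · exact claimC s s'
    · rw [Finset.inter_comm]; exact claimC s' s
    · exact claimB s hs s' hs' fun e => hne (congrArg T2 e)
  · rw [Finset.card_union_of_disjoint hdisj, Finset.card_image_of_injOn injT1,
      Finset.card_image_of_injOn injT2, hE, Finset.card_powersetCard, Finset.card_univ,
      Fintype.card_fin]
    omega

/-- In a threshold graph with clique of even size `k` whose last clique vertex has no
neighbour in `S`, if at least `k/2` vertices of `S` dominate the top half of the clique,
then there is a triangle packing of size `2 * (k/2 choose 2)`. -/
theorem threshold_packing_large_X {V : Type*} [Fintype V] [DecidableEq V]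
    (G : SimpleGraph V) [DecidableRel G.Adj]
    (R : ThresholdRep G) (hpos : 0 < R.k) (heven : Even R.k)
    (hlast : ∀ j : Fin R.s, ¬ G.Adj (R.c ⟨R.k - 1, Nat.sub_lt hpos one_pos⟩) (R.u j))
    (X : Finset (Fin R.s))
    (hX : X = Finset.univ.filter
      (fun j => ∀ i : Fin R.k, i.val < R.k / 2 → G.Adj (R.c i) (R.u j)))
    (hXcard : R.k / 2 ≤ X.card) :
    ∃ P : Finset (Finset V), IsTrianglePacking G P ∧
      P.card = 2 * (R.k / 2).choose 2 := by
  obtain ⟨m, hm⟩ := heven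
  have hm2 : R.k / 2 = m := by omega
  have hmpos : 0 < m := by omega
  have hcard : m ≤ X.card := hm2 ▸ hXcard
  have hlt1 : ∀ a : Fin m, (a : ℕ) < R.k := fun a => by have := a.2; omega
  have hlt2 : ∀ a : Fin m, m + (a : ℕ) < R.k := fun a => by have := a.2; omega
  rw [hm2]
  refine pack_aux G m hmpos (fun a => R.c ⟨a, hlt1 a⟩) (fun a => R.c ⟨m + a, hlt2 a⟩)
    (fun b => R.u (X.orderEmbOfCardLe hcard b)) ?_ ?_ ?_ ?_ ?_ ?_ ?_ ?_ ?_ ?_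
  · intro a b e
    have h1 := R.inj_c e
    simp only [Fin.mk.injEq] at h1
    exact Fin.val_injective h1
  · intro a b e
    have h1 := R.inj_c e
    simp only [Fin.mk.injEq] at h1
    exact Fin.val_injective (by omega)
  · intro a b e
    exact (X.orderEmbOfCardLe hcard).injective (R.inj_u e)
  · intro a b e
    have h1 := R.inj_c e
    simp only [Fin.mk.injEq] at h1
    have h2 := a.2
    omega
  · intro a b
    exact R.disj _ _
  · intro a b
    exact R.disj _ _
  · intro a b hne
    refine R.clique _ _ fun e => hne ?_
    simp only [Fin.mk.injEq] at e
    exact Fin.val_injective e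
  · intro a b hne
    refine R.clique _ _ fun e => hne ?_
    simp only [Fin.mk.injEq] at e
    exact Fin.val_injective (by omega)
  · intro a b
    refine R.clique _ _ fun e => ?_
    simp only [Fin.mk.injEq] at e
    have h2 := a.2
    omega
  · intro a b
    have hprop : ∀ j ∈ X, ∀ i : Fin R.k, i.val < R.k / 2 → G.Adj (R.c i) (R.u j) := by
      intro j hj
      rw [hX] at hj
      exact (Finset.mem_filter.mp hj).2
    exact hprop _ (X.orderEmbOfCardLe_mem hcard b) ⟨a, hlt1 a⟩ (by simpa [hm2] using a.2)
end

section
/- Let G be a threshold graph with representation (K, S), K of size k, such that c_k has no neighbour in S. Then the set of all edges of K not incident to c_k is a triangle hitting set of G of size binom(k-1, 2). -/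
open Finset

/-- Counting strictly increasing pairs from a finset. -/
lemma card_filter_lt_pairs {α : Type*} [LinearOrder α] [DecidableEq α] (A : Finset α) :
    ((A ×ˢ A).filter fun p => p.1 < p.2).card = A.card.choose 2 := by
  rw [← Finset.card_powersetCard 2 A]
  apply Finset.card_bij (fun p _ => ({p.1, p.2} : Finset α))
  · rintro ⟨a, b⟩ hp
    simp only [Finset.mem_filter, Finset.mem_product] at hp
    rw [Finset.mem_powersetCard]
    refine ⟨?_, ?_⟩
    · intro x hx
      simp only [Finset.mem_insert, Finset.mem_singleton] at hx
      rcases hx with rfl | rfl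
      exacts [hp.1.1, hp.1.2]
    · rw [Finset.card_insert_of_notMem (by simp [hp.2.ne]), Finset.card_singleton]
  · rintro ⟨a, b⟩ ha ⟨a', b'⟩ hb h
    simp only [Finset.mem_filter, Finset.mem_product] at ha hb
    have haa : a ∈ ({a', b'} : Finset α) := by rw [← h]; simp
    have hbb : b ∈ ({a', b'} : Finset α) := by rw [← h]; simp
    simp only [Finset.mem_insert, Finset.mem_singleton] at haa hbb
    have : a = a' ∧ b = b' := by
      rcases haa with rfl | rfl
      · rcases hbb with rfl | rfl
        · exact absurd ha.2 (lt_irrefl _)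
        · exact ⟨rfl, rfl⟩
      · rcases hbb with rfl | rfl
        · exact absurd (ha.2.trans hb.2) (lt_irrefl _)
        · exact absurd ha.2 (lt_irrefl _)
    simp [Prod.ext_iff, this.1, this.2]
  · intro s hs
    rw [Finset.mem_powersetCard] at hs
    obtain ⟨a, b, hab, rfl⟩ := Finset.card_eq_two.mp hs.2
    have haA : a ∈ A := hs.1 (by simp)
    have hbA : b ∈ A := hs.1 (by simp)
    rcases hab.lt_or_gt with h | h
    · exact ⟨(a, b), by simp [Finset.mem_filter, haA, hbA, h], rfl⟩
    · exact ⟨(b, a), by simp [Finset.mem_filter, haA, hbA, h], by rw [Finset.pair_comm]⟩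

/-- In a threshold graph whose last clique vertex `c_k` has no neighbour in `S`, the set
of all edges of the clique not incident to `c_k` is a triangle hitting set of size
`(k-1) choose 2`. -/
theorem threshold_hitting_clique_minus_last {V : Type*} [Fintype V] [DecidableEq V]
    (G : SimpleGraph V) [DecidableRel G.Adj]
    (R : ThresholdRep G) (hpos : 0 < R.k)
    (hlast : ∀ j : Fin R.s, ¬ G.Adj (R.c ⟨R.k - 1, Nat.sub_lt hpos one_pos⟩) (R.u j))
    (H : Finset (Sym2 V))
    (hH : H = ((Finset.univ : Finset (Fin R.k × Fin R.k)).filter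
      (fun p => p.1 ≠ p.2 ∧ p.1.val ≠ R.k - 1 ∧ p.2.val ≠ R.k - 1)).image
      (fun p => s(R.c p.1, R.c p.2))) :
    IsTriangleHitting G H ∧ H.card = (R.k - 1).choose 2 := by
  subst hH
  set last : Fin R.k := ⟨R.k - 1, Nat.sub_lt hpos one_pos⟩ with hlastdef
  have hval : ∀ i : Fin R.k, i.val ≠ R.k - 1 ↔ i ≠ last := by
    intro i
    constructor
    · intro h hi; exact h (by rw [hi])
    · intro h hv; exact h (Fin.ext hv)
  constructor
  · constructor
    · intro e he
      simp only [Finset.mem_image, Finset.mem_filter, Finset.mem_univ, true_and] at he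
      obtain ⟨p, ⟨hne, -, -⟩, rfl⟩ := he
      rw [SimpleGraph.mem_edgeFinset, SimpleGraph.mem_edgeSet]
      exact R.clique _ _ hne
    · intro t ht
      obtain ⟨hcard, hclq⟩ := ht
      obtain ⟨x, y, z, hxy, hxz, hyz, rfl⟩ := Finset.card_eq_three.mp hcard
      have hxm : x ∈ ({x, y, z} : Finset V) := by simp
      have hym : y ∈ ({x, y, z} : Finset V) := by simp
      have hzm : z ∈ ({x, y, z} : Finset V) := by simp
      have axy : G.Adj x y := hclq (by simp) (by simp) hxy
      have axz : G.Adj x z := hclq (by simp) (by simp) hxz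
      have ayz : G.Adj y z := hclq (by simp) (by simp) hyz
      have key : ∃ a b : Fin R.k, a ≠ b ∧ a ≠ last ∧ b ≠ last ∧
          R.c a ∈ ({x, y, z} : Finset V) ∧ R.c b ∈ ({x, y, z} : Finset V) := by
        rcases R.cover x with ⟨i, rfl⟩ | ⟨i, rfl⟩ <;>
          rcases R.cover y with ⟨j, rfl⟩ | ⟨j, rfl⟩ <;>
          rcases R.cover z with ⟨m, rfl⟩ | ⟨m, rfl⟩
        · -- all clique
          have hij : i ≠ j := fun h => hxy (by rw [h])
          have him : i ≠ m := fun h => hxz (by rw [h])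
          have hjm : j ≠ m := fun h => hyz (by rw [h])
          by_cases hi : i = last
          · exact ⟨j, m, hjm, fun h => hij (hi.trans h.symm), fun h => him (hi.trans h.symm),
              hym, hzm⟩
          · by_cases hj : j = last
            · exact ⟨i, m, him, hi, fun h => hjm ((hj.trans h.symm).symm ▸ rfl), hxm, hzm⟩
            · exact ⟨i, j, hij, hi, hj, hxm, hym⟩
        · -- x=c i, y=c j, z=u m
          have hij : i ≠ j := fun h => hxy (by rw [h])
          refine ⟨i, j, hij, ?_, ?_, hxm, hym⟩
          · rintro rfl; exact hlast m axz
          · rintro rfl; exact hlast m ayz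
        · -- x=c i, y=u j, z=c m
          have him : i ≠ m := fun h => hxz (by rw [h])
          refine ⟨i, m, him, ?_, ?_, hxm, hzm⟩
          · rintro rfl; exact hlast j axy
          · rintro rfl; exact hlast j ayz.symm
        · exact absurd ayz (R.indep _ _)
        · -- x=u i, y=c j, z=c m
          have hjm : j ≠ m := fun h => hyz (by rw [h])
          refine ⟨j, m, hjm, ?_, ?_, hym, hzm⟩
          · rintro rfl; exact hlast i axy.symm
          · rintro rfl; exact hlast i axz.symm
        · exact absurd axz (R.indep _ _)
        · exact absurd axy (R.indep _ _)
        · exact absurd axy (R.indep _ _)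
      obtain ⟨a, b, hab, ha, hb, hat, hbt⟩ := key
      refine ⟨s(R.c a, R.c b), ?_, ?_⟩
      · simp only [Finset.mem_image, Finset.mem_filter, Finset.mem_univ, true_and]
        exact ⟨(a, b), ⟨hab, (hval a).2 ha, (hval b).2 hb⟩, rfl⟩
      · intro v hv
        rw [Sym2.mem_iff] at hv
        rcases hv with rfl | rfl
        exacts [hat, hbt]
  · have himg : (((Finset.univ : Finset (Fin R.k × Fin R.k)).filter
        (fun p => p.1 ≠ p.2 ∧ p.1.val ≠ R.k - 1 ∧ p.2.val ≠ R.k - 1)).image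
        (fun p => s(R.c p.1, R.c p.2)))
        = (((Finset.univ : Finset (Fin R.k × Fin R.k)).filter
        (fun p => p.1 < p.2 ∧ p.1.val ≠ R.k - 1 ∧ p.2.val ≠ R.k - 1)).image
        (fun p => s(R.c p.1, R.c p.2))) := by
      apply Finset.Subset.antisymm
      · intro e he
        simp only [Finset.mem_image, Finset.mem_filter, Finset.mem_univ, true_and] at he ⊢
        obtain ⟨⟨a, b⟩, ⟨hne, ha, hb⟩, rfl⟩ := he
        rcases hne.lt_or_gt with h | h
        · exact ⟨(a, b), ⟨h, ha, hb⟩, rfl⟩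
        · exact ⟨(b, a), ⟨h, hb, ha⟩, Sym2.eq_swap⟩
      · apply Finset.image_subset_image
        intro p hp
        simp only [Finset.mem_filter, Finset.mem_univ, true_and] at hp ⊢
        exact ⟨hp.1.ne, hp.2⟩
    rw [himg, Finset.card_image_of_injOn]
    · have hset : ((Finset.univ : Finset (Fin R.k × Fin R.k)).filter
          (fun p => p.1 < p.2 ∧ p.1.val ≠ R.k - 1 ∧ p.2.val ≠ R.k - 1))
          = ((Finset.univ.filter (fun i : Fin R.k => i.val ≠ R.k - 1)) ×ˢ
             (Finset.univ.filter (fun i : Fin R.k => i.val ≠ R.k - 1))).filter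
            (fun p => p.1 < p.2) := by
        ext ⟨a, b⟩
        simp only [Finset.mem_filter, Finset.mem_product, Finset.mem_univ, true_and]
        tauto
      rw [hset, card_filter_lt_pairs]
      congr 1
      have : (Finset.univ.filter (fun i : Fin R.k => i.val ≠ R.k - 1))
          = Finset.univ.erase last := by
        ext i
        simp only [Finset.mem_filter, Finset.mem_univ, true_and, Finset.mem_erase,
          and_true]
        exact hval i
      rw [this, Finset.card_erase_of_mem (Finset.mem_univ _), Finset.card_univ,
        Fintype.card_fin]
    · rintro ⟨a, b⟩ ha ⟨a', b'⟩ hb h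
      simp only [Finset.coe_filter, Set.mem_setOf_eq, Finset.mem_univ, true_and] at ha hb
      simp only [Sym2.eq_iff] at h
      rcases h with ⟨h1, h2⟩ | ⟨h1, h2⟩
      · simp [Prod.ext_iff, R.inj_c h1, R.inj_c h2]
      · have e1 := R.inj_c h1
        have e2 := R.inj_c h2
        subst e1; subst e2
        exact absurd (ha.1.trans hb.1) (lt_irrefl _)
end

section
/- Let G be a threshold graph with representation (K, S), K of even size k, c_k having no neighbour in S, K partitioned into K_top = {c_1,...,c_{k/2}} and K_bot = {c_{k/2+1},...,c_k}, and X = {u ∈ S : K_top ⊆ N(u)}. Then the union of all edges inside K_top, all edges inside K_bot, and all edges between S and K_bot is a triangle hitting set of G of size at most 2·binom(k/2, 2) + |X|·(k/2 − 1). -/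
open Finset

/-!
Since `S` is independent, every triangle has at least two clique vertices. If all three of
its vertices are clique vertices, two of them lie in the same half; otherwise the triangle is
`{c a, c b, u}`, hit by the edge `c a c b` when both lie in `K_top` and by the edge from `u`
to one of them in `K_bot` otherwise. For the size bound, nestedness of the clique
neighbourhoods puts every vertex of `S` with a neighbour in `K_bot` into `X`, and `c_k` has
no neighbour in `S`, so at most `|X| (k/2 - 1)` edges run between `S` and `K_bot`.
-/

theorem Fin.card_filter_le_card_of_val_mem {n : ℕ} {p : Fin n → Prop} [DecidablePred p]
    (s : Finset ℕ) (hs : ∀ i, p i → (i : ℕ) ∈ s) : #{i | p i} ≤ #s :=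
  card_le_card_of_injOn Fin.val (fun i hi => hs i (mem_filter.mp hi).2) Fin.val_injective.injOn

namespace ThresholdRep

variable {V : Type*} {G : SimpleGraph V} (R : ThresholdRep G)

theorem adj_of_adj_succ {i : Fin R.k} {j : Fin R.s} (hi : i.val + 1 < R.k)
    (hadj : G.Adj (R.c ⟨i.val + 1, hi⟩) (R.u j)) : G.Adj (R.c i) (R.u j) := by
  rcases R.nestedK i hi (Set.mem_insert_of_mem _ hadj) with h | h
  · exact absurd h.symm (R.disj i j)
  · exact h

theorem adj_of_le_s12 {a b : Fin R.k} {j : Fin R.s} (hab : a ≤ b)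
    (hadj : G.Adj (R.c b) (R.u j)) : G.Adj (R.c a) (R.u j) := by
  obtain ⟨b, hb⟩ := b
  induction b with
  | zero => rwa [show a = ⟨0, hb⟩ from Fin.ext (Nat.le_zero.mp hab)]
  | succ n ih =>
    rcases hab.lt_or_eq with hlt | rfl
    · exact ih (by omega) (Nat.lt_succ_iff.mp hlt) (R.adj_of_adj_succ hb hadj)
    · exact hadj

variable [DecidableEq V]

theorem triangle_cases {t : Finset V} (ht : IsTriangle G t) :
    (∃ a b d, a ≠ b ∧ a ≠ d ∧ b ≠ d ∧ R.c a ∈ t ∧ R.c b ∈ t ∧ R.c d ∈ t) ∨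
      ∃ a b j, a ≠ b ∧ R.c a ∈ t ∧ R.c b ∈ t ∧ R.u j ∈ t := by
  obtain ⟨x, y, z, hxy, hxz, hyz, rfl⟩ := card_eq_three.mp ht.1
  have hadj := ht.2
  rcases R.cover x with ⟨a, rfl⟩ | ⟨i, rfl⟩ <;> rcases R.cover y with ⟨b, rfl⟩ | ⟨j, rfl⟩ <;>
    rcases R.cover z with ⟨d, rfl⟩ | ⟨l, rfl⟩
  · exact Or.inl ⟨a, b, d, ne_of_apply_ne R.c hxy, ne_of_apply_ne R.c hxz,
      ne_of_apply_ne R.c hyz, by simp⟩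
  · exact Or.inr ⟨a, b, l, ne_of_apply_ne R.c hxy, by simp⟩
  · exact Or.inr ⟨a, d, j, ne_of_apply_ne R.c hxz, by simp⟩
  · exact absurd (hadj (by simp) (by simp) hyz) (R.indep j l)
  · exact Or.inr ⟨b, d, i, ne_of_apply_ne R.c hyz, by simp⟩
  · exact absurd (hadj (by simp) (by simp) hxz) (R.indep i l)
  all_goals exact absurd (hadj (by simp) (by simp) hxy) (R.indep i j)

variable (P : Fin R.k → Prop) [DecidablePred P]

def cliqueEdges : Finset (Sym2 V) :=
  ((univ : Finset (Fin R.k × Fin R.k)).filter (fun p => p.1 ≠ p.2 ∧ P p.1 ∧ P p.2)).image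
    (fun p => s(R.c p.1, R.c p.2))

variable {P} in
theorem mem_cliqueEdges {a b : Fin R.k} (hab : a ≠ b) (ha : P a) (hb : P b) :
    s(R.c a, R.c b) ∈ R.cliqueEdges P :=
  mem_image.mpr ⟨(a, b), by simp [hab, ha, hb], rfl⟩

theorem card_cliqueEdges_le : #(R.cliqueEdges P) ≤ (#{i | P i}).choose 2 := by
  have hsub : R.cliqueEdges P ⊆
      ((univ.filter P).offDiag.image Sym2.mk.uncurry).image (Sym2.map R.c) := by
    rintro _ he
    obtain ⟨p, hp, rfl⟩ := mem_image.mp he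
    obtain ⟨hne, h1, h2⟩ := (mem_filter.mp hp).2
    exact mem_image.mpr ⟨s(p.1, p.2), mem_image.mpr ⟨p, by simp [h1, h2, hne], rfl⟩, rfl⟩
  calc #(R.cliqueEdges P) ≤ _ := card_le_card hsub
    _ ≤ _ := card_image_le
    _ = _ := Sym2.card_image_offDiag _

variable [DecidableRel G.Adj]

def crossEdges : Finset (Sym2 V) :=
  ((univ : Finset (Fin R.k × Fin R.s)).filter
    (fun p => P p.1 ∧ G.Adj (R.c p.1) (R.u p.2))).image (fun p => s(R.c p.1, R.u p.2))

variable {P} in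
theorem mem_crossEdges {a : Fin R.k} {j : Fin R.s} (ha : P a)
    (hadj : G.Adj (R.c a) (R.u j)) : s(R.c a, R.u j) ∈ R.crossEdges P :=
  mem_image.mpr ⟨(a, j), by simp [ha, hadj], rfl⟩

theorem cliqueEdges_subset_edgeFinset [Fintype V] : R.cliqueEdges P ⊆ G.edgeFinset := by
  rintro _ he
  obtain ⟨p, hp, rfl⟩ := mem_image.mp he
  exact SimpleGraph.mem_edgeFinset.mpr (R.clique p.1 p.2 (mem_filter.mp hp).2.1)

theorem crossEdges_subset_edgeFinset [Fintype V] : R.crossEdges P ⊆ G.edgeFinset := by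
  rintro _ he
  obtain ⟨p, hp, rfl⟩ := mem_image.mp he
  exact SimpleGraph.mem_edgeFinset.mpr (mem_filter.mp hp).2.2

theorem isTriangleHitting_cliqueEdges_union_crossEdges [Fintype V] (Q : Fin R.k → Prop)
    [DecidablePred Q] (hPQ : ∀ i, P i ∨ Q i) :
    IsTriangleHitting G (R.cliqueEdges P ∪ R.cliqueEdges Q ∪ R.crossEdges Q) := by
  set H := R.cliqueEdges P ∪ R.cliqueEdges Q ∪ R.crossEdges Q
  refine ⟨union_subset (union_subset (R.cliqueEdges_subset_edgeFinset P)
    (R.cliqueEdges_subset_edgeFinset Q)) (R.crossEdges_subset_edgeFinset Q), fun t ht => ?_⟩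
  have hits : ∀ {x y : V}, s(x, y) ∈ H → x ∈ t → y ∈ t → ∃ e ∈ H, ∀ v ∈ e, v ∈ t :=
    fun he hx hy => ⟨_, he, fun v hv => by
      rcases Sym2.mem_iff.mp hv with rfl | rfl <;> assumption⟩
  have hclique : ∀ {a b : Fin R.k}, a ≠ b → P a ∧ P b ∨ Q a ∧ Q b → s(R.c a, R.c b) ∈ H := by
    rintro a b hab (⟨ha, hb⟩ | ⟨ha, hb⟩)
    · exact mem_union_left _ (mem_union_left _ (R.mem_cliqueEdges hab ha hb))
    · exact mem_union_left _ (mem_union_right _ (R.mem_cliqueEdges hab ha hb))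
  rcases R.triangle_cases ht with
    ⟨a, b, d, hab, had, hbd, ha, hb, hd⟩ | ⟨a, b, j, hab, ha, hb, hj⟩
  · have := hPQ a; have := hPQ b; have := hPQ d
    have hpair : (P a ∧ P b ∨ Q a ∧ Q b) ∨ (P a ∧ P d ∨ Q a ∧ Q d) ∨
        (P b ∧ P d ∨ Q b ∧ Q d) := by
      tauto
    rcases hpair with h | h | h
    · exact hits (hclique hab h) ha hb
    · exact hits (hclique had h) ha hd
    · exact hits (hclique hbd h) hb hd
  · have hcross : ∀ {i}, R.c i ∈ t → Q i → s(R.c i, R.u j) ∈ H :=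
      fun hi hQ => mem_union_right _ (R.mem_crossEdges hQ (ht.2 hi hj (R.disj _ j)))
    by_cases hPab : P a ∧ P b
    · exact hits (hclique hab (Or.inl hPab)) ha hb
    · rcases not_and_or.mp hPab with hPa | hPb
      · exact hits (hcross ha ((hPQ a).resolve_left hPa)) ha hj
      · exact hits (hcross hb ((hPQ b).resolve_left hPb)) hb hj

def dominators (h : ℕ) : Finset (Fin R.s) :=
  univ.filter (fun j => ∀ i : Fin R.k, i.val < h → G.Adj (R.c i) (R.u j))

theorem card_crossEdges_le (h : ℕ) (hlast : ∀ i j, G.Adj (R.c i) (R.u j) → i.val + 1 < R.k) :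
    #(R.crossEdges (fun i => h ≤ i.val)) ≤ (R.k - 1 - h) * #(R.dominators h) := by
  have hsub :
      (univ.filter fun p : Fin R.k × Fin R.s => h ≤ p.1.val ∧ G.Adj (R.c p.1) (R.u p.2)) ⊆
        (univ.filter fun i : Fin R.k => h ≤ i.val ∧ i.val + 1 < R.k) ×ˢ R.dominators h := by
    rintro ⟨i, j⟩ hp
    obtain ⟨hi, hadj⟩ := (mem_filter.mp hp).2
    refine mem_product.mpr ⟨mem_filter.mpr ⟨mem_univ _, hi, hlast i j hadj⟩,
      mem_filter.mpr ⟨mem_univ _, fun i' hi' => R.adj_of_le_s12 ?_ hadj⟩⟩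
    exact Fin.le_iff_val_le_val.mpr (by omega)
  calc #(R.crossEdges (fun i => h ≤ i.val)) ≤ _ := card_image_le
    _ ≤ _ := card_le_card hsub
    _ = _ := card_product _ _
    _ ≤ #(Ico h (R.k - 1)) * #(R.dominators h) := Nat.mul_le_mul_right _
        (Fin.card_filter_le_card_of_val_mem _ fun i hi => mem_Ico.mpr (by omega))
    _ = _ := by rw [Nat.card_Ico]

end ThresholdRep

/-- In a threshold graph with clique of even size `k` whose last clique vertex has no
neighbour in `S`, the edges inside the top half, the edges inside the bottom half, and
all edges between `S` and the bottom half form a triangle hitting set of size at most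
`2 * (k/2 choose 2) + |X| * (k/2 - 1)`, where `X` is the set of vertices of `S`
dominating the top half. -/
theorem threshold_hitting_halves {V : Type*} [Fintype V] [DecidableEq V]
    (G : SimpleGraph V) [DecidableRel G.Adj]
    (R : ThresholdRep G) (hpos : 0 < R.k) (heven : Even R.k)
    (hlast : ∀ j : Fin R.s, ¬ G.Adj (R.c ⟨R.k - 1, Nat.sub_lt hpos one_pos⟩) (R.u j))
    (X : Finset (Fin R.s))
    (hX : X = Finset.univ.filter
      (fun j => ∀ i : Fin R.k, i.val < R.k / 2 → G.Adj (R.c i) (R.u j)))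
    (H : Finset (Sym2 V))
    (hH : H =
      ((Finset.univ : Finset (Fin R.k × Fin R.k)).filter
        (fun p => p.1 ≠ p.2 ∧ p.1.val < R.k / 2 ∧ p.2.val < R.k / 2)).image
        (fun p => s(R.c p.1, R.c p.2)) ∪
      ((Finset.univ : Finset (Fin R.k × Fin R.k)).filter
        (fun p => p.1 ≠ p.2 ∧ R.k / 2 ≤ p.1.val ∧ R.k / 2 ≤ p.2.val)).image
        (fun p => s(R.c p.1, R.c p.2)) ∪
      ((Finset.univ : Finset (Fin R.k × Fin R.s)).filter
        (fun p => R.k / 2 ≤ p.1.val ∧ G.Adj (R.c p.1) (R.u p.2))).image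
        (fun p => s(R.c p.1, R.u p.2))) :
    IsTriangleHitting G H ∧
      H.card ≤ 2 * (R.k / 2).choose 2 + X.card * (R.k / 2 - 1) := by
  set h := R.k / 2
  change X = R.dominators h at hX
  change H = R.cliqueEdges (fun i => i.val < h) ∪ R.cliqueEdges (fun i => h ≤ i.val) ∪
    R.crossEdges (fun i => h ≤ i.val) at hH
  subst hX hH
  have hlast' : ∀ i j, G.Adj (R.c i) (R.u j) → i.val + 1 < R.k := fun i j hadj => by
    by_contra hi
    have hi : i = ⟨R.k - 1, Nat.sub_lt hpos one_pos⟩ := Fin.ext (show i.val = R.k - 1 by omega)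
    exact hlast j (hi ▸ hadj)
  have hhalf : R.k - h = h := by obtain ⟨m, hm⟩ := heven; omega
  have htop : #{i : Fin R.k | i.val < h} ≤ h := by
    simpa using Fin.card_filter_le_card_of_val_mem (range h) fun i hi => mem_range.mpr hi
  have hbot : #{i : Fin R.k | h ≤ i.val} ≤ h := by
    simpa [hhalf] using Fin.card_filter_le_card_of_val_mem (Ico h R.k)
      fun i hi => mem_Ico.mpr ⟨hi, i.isLt⟩
  refine ⟨R.isTriangleHitting_cliqueEdges_union_crossEdges _ _ fun i => lt_or_ge _ _, ?_⟩
  calc _ ≤ _ := (card_union_le _ _).trans (Nat.add_le_add_right (card_union_le _ _) _)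
    _ ≤ h.choose 2 + h.choose 2 + (R.k - 1 - h) * #(R.dominators h) :=
      Nat.add_le_add (Nat.add_le_add
        ((R.card_cliqueEdges_le _).trans (Nat.choose_le_choose 2 htop))
        ((R.card_cliqueEdges_le _).trans (Nat.choose_le_choose 2 hbot)))
        (R.card_crossEdges_le h hlast')
    _ = _ := by rw [show R.k - 1 - h = h - 1 by omega, two_mul, mul_comm]
end

section
/- Let G be a graph whose vertex set partitions into two cliques K_1 and K_2, each of size 2ℓ, with orderings such that closed neighbourhoods are nested as in a co-chain graph. Let X_1 = {c ∈ K_1 : bottom half of K_2 ⊆ N[c]} and X_2 = {d ∈ K_2 : top half of K_1 ⊆ N[d]}. Then |X_1| ≥ ℓ if and only if |X_2| ≥ ℓ. -/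
open Finset

/-!
Indexing from 0, the adjacency between the two cliques is monotone: if `cᵢ ~ dⱼ` then
`cᵢ' ~ dⱼ'` whenever `i' ≤ i` and `j ≤ j'`. Hence `X₁ = {i | cᵢ ~ d_ℓ}` is an initial segment of `K₁`, and it has at
least `ℓ` elements iff it contains `c_{ℓ-1}`, i.e. iff `c_{ℓ-1} ~ d_ℓ`. Symmetrically
`X₂ = {j | c_{ℓ-1} ~ dⱼ}` is a final segment of `K₂`, with at least `ℓ = 2ℓ - ℓ` elements iff
it contains `d_ℓ`, which is the same condition.
-/

theorem Fin.antitone_of_succ_le {α : Type*} [Preorder α] {n : ℕ} {f : Fin n → α}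
    (hf : ∀ (i : Fin n) (h : i.val + 1 < n), f ⟨i.val + 1, h⟩ ≤ f i) : Antitone f := by
  refine _root_.antitone_of_succ_le fun i hi => ?_
  have hlt : i < Order.succ i := Order.lt_succ_of_not_isMax hi
  have hnext : i.val + 1 < n := lt_of_le_of_lt (Fin.lt_def.mp hlt) (Order.succ i).isLt
  have hsucc : Order.succ i = ⟨i.val + 1, hnext⟩ :=
    le_antisymm (Order.succ_le_of_lt (Fin.lt_def.mpr (Nat.lt_succ_self _))) (Fin.lt_def.mp hlt)
  exact hsucc ▸ hf i hnext

theorem Fin.monotone_of_le_succ {α : Type*} [Preorder α] {n : ℕ} {f : Fin n → α}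
    (hf : ∀ (i : Fin n) (h : i.val + 1 < n), f i ≤ f ⟨i.val + 1, h⟩) : Monotone f :=
  Fin.antitone_of_succ_le (α := αᵒᵈ) hf

theorem IsLowerSet.fin_mem_iff_le_card {n : ℕ} {s : Finset (Fin n)}
    (hs : IsLowerSet (s : Set (Fin n))) (a : Fin n) : a ∈ s ↔ a.val + 1 ≤ #s := by
  constructor
  · intro ha
    rw [← Fin.card_Iic]
    exact card_le_card fun x hx => hs (mem_Iic.mp hx) ha
  · intro hcard
    by_contra ha
    have hsub : s ⊆ Iio a := fun x hx => mem_Iio.mpr (lt_of_not_ge fun hax => ha (hs hax hx))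
    have := card_le_card hsub
    rw [Fin.card_Iio] at this
    omega

theorem IsUpperSet.fin_mem_iff_le_card {n : ℕ} {s : Finset (Fin n)}
    (hs : IsUpperSet (s : Set (Fin n))) (a : Fin n) : a ∈ s ↔ n - a.val ≤ #s := by
  constructor
  · intro ha
    rw [← Fin.card_Ici]
    exact card_le_card fun x hx => hs (mem_Ici.mp hx) ha
  · intro hcard
    by_contra ha
    have hsub : s ⊆ Ioi a := fun x hx => mem_Ioi.mpr (lt_of_not_ge fun hxa => ha (hs hxa hx))
    have := card_le_card hsub
    rw [Fin.card_Ioi] at this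
    omega

theorem SimpleGraph.mem_insert_neighborSet_iff {V : Type*} (G : SimpleGraph V) {x y : V} :
    x ∈ (insert y (G.neighborSet y) : Set V) ↔ x = y ∨ G.Adj y x := by
  simp only [Set.mem_insert_iff, SimpleGraph.mem_neighborSet]

namespace CoChainRep

variable {V : Type*} {G : SimpleGraph V} (R : CoChainRep G)

theorem closedNbhd_c_antitone :
    Antitone fun i => (insert (R.c i) (G.neighborSet (R.c i)) : Set V) :=
  Fin.antitone_of_succ_le R.nested1

theorem closedNbhd_d_monotone :
    Monotone fun j => (insert (R.d j) (G.neighborSet (R.d j)) : Set V) :=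
  Fin.monotone_of_le_succ R.nested2

theorem adj_of_le {i i' : Fin R.n} {j j' : Fin R.m} (hi : i' ≤ i) (hj : j ≤ j')
    (h : G.Adj (R.c i) (R.d j)) : G.Adj (R.c i') (R.d j') := by
  have h₁ : R.d j ∈ (insert (R.c i') (G.neighborSet (R.c i')) : Set V) :=
    R.closedNbhd_c_antitone hi (G.mem_insert_neighborSet_iff.mpr (Or.inr h))
  have h₁' : G.Adj (R.c i') (R.d j) :=
    (G.mem_insert_neighborSet_iff.mp h₁).resolve_left (R.disj i' j).symm
  have h₂ : R.c i' ∈ (insert (R.d j') (G.neighborSet (R.d j')) : Set V) :=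
    R.closedNbhd_d_monotone hj (G.mem_insert_neighborSet_iff.mpr (Or.inr h₁'.symm))
  exact ((G.mem_insert_neighborSet_iff.mp h₂).resolve_left (R.disj i' j')).symm

theorem d_eq_c_or_adj_iff (i : Fin R.n) (j : Fin R.m) :
    R.d j = R.c i ∨ G.Adj (R.c i) (R.d j) ↔ G.Adj (R.c i) (R.d j) :=
  or_iff_right (R.disj i j).symm

theorem c_eq_d_or_adj_iff (i : Fin R.n) (j : Fin R.m) :
    R.c i = R.d j ∨ G.Adj (R.d j) (R.c i) ↔ G.Adj (R.c i) (R.d j) := by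
  rw [or_iff_right (R.disj i j), G.adj_comm]

end CoChainRep

theorem cochain_X_iff_general {V : Type*} [DecidableEq V]
    (G : SimpleGraph V) [DecidableRel G.Adj]
    (R : CoChainRep G) (ℓ : ℕ) (hn : R.n = 2 * ℓ) (hm : R.m = 2 * ℓ)
    (X₁ : Finset (Fin R.n)) (X₂ : Finset (Fin R.m))
    (hX₁ : X₁ = Finset.univ.filter
      (fun i => ∀ j : Fin R.m, ℓ ≤ j.val → (R.d j = R.c i ∨ G.Adj (R.c i) (R.d j))))
    (hX₂ : X₂ = Finset.univ.filter
      (fun j => ∀ i : Fin R.n, i.val < ℓ → (R.c i = R.d j ∨ G.Adj (R.d j) (R.c i)))) :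
    (ℓ ≤ X₁.card ↔ ℓ ≤ X₂.card) := by
  obtain _ | k := ℓ
  · simp
  let a : Fin R.n := ⟨k, by omega⟩
  let b : Fin R.m := ⟨k + 1, by omega⟩
  have mem₁ : ∀ i, i ∈ X₁ ↔ G.Adj (R.c i) (R.d b) := fun i => by
    simp only [hX₁, mem_filter, mem_univ, true_and, R.d_eq_c_or_adj_iff]
    exact ⟨fun h => h b le_rfl, fun h j hj => R.adj_of_le le_rfl hj h⟩
  have mem₂ : ∀ j, j ∈ X₂ ↔ G.Adj (R.c a) (R.d j) := fun j => by
    simp only [hX₂, mem_filter, mem_univ, true_and, R.c_eq_d_or_adj_iff]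
    exact ⟨fun h => h a (Nat.lt_succ_self k),
      fun h i hi => R.adj_of_le (Nat.le_of_lt_succ hi) le_rfl h⟩
  have lower : IsLowerSet (X₁ : Set (Fin R.n)) := fun i i' hi h => by
    rw [mem_coe, mem₁] at h ⊢
    exact R.adj_of_le hi le_rfl h
  have upper : IsUpperSet (X₂ : Set (Fin R.m)) := fun j j' hj h => by
    rw [mem_coe, mem₂] at h ⊢
    exact R.adj_of_le le_rfl hj h
  have card₁ : k + 1 ≤ #X₁ ↔ a ∈ X₁ := (lower.fin_mem_iff_le_card a).symm
  have card₂ : k + 1 ≤ #X₂ ↔ b ∈ X₂ := by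
    have hb : R.m - b.val = k + 1 := by simp only [b]; omega
    rw [upper.fin_mem_iff_le_card b, hb]
  rw [card₁, card₂, mem₁, mem₂]

/-- In a balanced co-chain graph with both cliques of size `2ℓ`, letting `X₁` be the
vertices of the first clique dominating the bottom half of the second and `X₂` the
vertices of the second clique dominating the top half of the first, we have
`|X₁| ≥ ℓ ↔ |X₂| ≥ ℓ`. -/
theorem cochain_X_iff {V : Type*} [Fintype V] [DecidableEq V]
    (G : SimpleGraph V) [DecidableRel G.Adj]
    (R : CoChainRep G) (ℓ : ℕ) (hn : R.n = 2 * ℓ) (hm : R.m = 2 * ℓ)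
    (X₁ : Finset (Fin R.n)) (X₂ : Finset (Fin R.m))
    (hX₁ : X₁ = Finset.univ.filter
      (fun i => ∀ j : Fin R.m, ℓ ≤ j.val → (R.d j = R.c i ∨ G.Adj (R.c i) (R.d j))))
    (hX₂ : X₂ = Finset.univ.filter
      (fun j => ∀ i : Fin R.n, i.val < ℓ → (R.c i = R.d j ∨ G.Adj (R.d j) (R.c i)))) :
    (ℓ ≤ X₁.card ↔ ℓ ≤ X₂.card) :=
  cochain_X_iff_general G R ℓ hn hm X₁ X₂ hX₁ hX₂
end

section
/- Let G be a balanced co-chain graph with cliques K_1, K_2 of size 2ℓ each, and define X_1, X_2 as the sets of vertices of K_1 (resp. K_2) dominating the bottom half of K_2 (resp. top half of K_1), with |X_1|, |X_2| ≤ ℓ. Then the edge set consisting of all edges inside the four half-cliques K_1^top, K_1^bot, K_2^top, K_2^bot, together with all edges between X_1 and K_2^bot and all edges between X_2 and K_1^top, is a triangle hitting set of G. -/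
open Finset

lemma CoChainRep.nested1_le {V : Type*} {G : SimpleGraph V} (R : CoChainRep G)
    (i j : Fin R.n) (hij : i.val ≤ j.val) :
    (insert (R.c j) (G.neighborSet (R.c j)) : Set V) ⊆
      insert (R.c i) (G.neighborSet (R.c i)) := by
  obtain ⟨j, hj⟩ := j
  induction j with
  | zero =>
    have hi : i = ⟨0, hj⟩ := Fin.ext (Nat.le_antisymm hij (Nat.zero_le _))
    rw [hi]
  | succ k ih =>
    rcases Nat.lt_or_ge i.val (k + 1) with h | h
    · have hk : k < R.n := Nat.lt_of_succ_lt hj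
      exact (R.nested1 ⟨k, hk⟩ hj).trans (ih hk (Nat.lt_succ_iff.mp h))
    · have hi : i = ⟨k + 1, hj⟩ := Fin.ext (Nat.le_antisymm hij h)
      rw [hi]

lemma CoChainRep.nested2_le {V : Type*} {G : SimpleGraph V} (R : CoChainRep G)
    (i j : Fin R.m) (hij : i.val ≤ j.val) :
    (insert (R.d i) (G.neighborSet (R.d i)) : Set V) ⊆
      insert (R.d j) (G.neighborSet (R.d j)) := by
  obtain ⟨j, hj⟩ := j
  induction j with
  | zero =>
    have hi : i = ⟨0, hj⟩ := Fin.ext (Nat.le_antisymm hij (Nat.zero_le _))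
    rw [hi]
  | succ k ih =>
    rcases Nat.lt_or_ge i.val (k + 1) with h | h
    · have hk : k < R.m := Nat.lt_of_succ_lt hj
      exact (ih hk (Nat.lt_succ_iff.mp h)).trans (R.nested2 ⟨k, hk⟩ hj)
    · have hi : i = ⟨k + 1, hj⟩ := Fin.ext (Nat.le_antisymm hij h)
      rw [hi]

/-- In a balanced co-chain graph with cliques of size `2ℓ` and `|X₁|, |X₂| ≤ ℓ`, the
edges inside the four half-cliques together with all edges between `X₁` and the bottom
half of `K₂` and between `X₂` and the top half of `K₁` form a triangle hitting set. -/
theorem cochain_hitting_small_X {V : Type*} [Fintype V] [DecidableEq V]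
    (G : SimpleGraph V) [DecidableRel G.Adj]
    (R : CoChainRep G) (ℓ : ℕ) (hn : R.n = 2 * ℓ) (hm : R.m = 2 * ℓ)
    (X₁ : Finset (Fin R.n)) (X₂ : Finset (Fin R.m))
    (hX₁ : X₁ = Finset.univ.filter
      (fun i => ∀ j : Fin R.m, ℓ ≤ j.val → (R.d j = R.c i ∨ G.Adj (R.c i) (R.d j))))
    (hX₂ : X₂ = Finset.univ.filter
      (fun j => ∀ i : Fin R.n, i.val < ℓ → (R.c i = R.d j ∨ G.Adj (R.d j) (R.c i))))
    (hX₁card : X₁.card ≤ ℓ) (hX₂card : X₂.card ≤ ℓ)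
    (H : Finset (Sym2 V))
    (hH : H =
      ((Finset.univ : Finset (Fin R.n × Fin R.n)).filter
        (fun p => p.1 ≠ p.2 ∧ p.1.val < ℓ ∧ p.2.val < ℓ)).image
        (fun p => s(R.c p.1, R.c p.2)) ∪
      ((Finset.univ : Finset (Fin R.n × Fin R.n)).filter
        (fun p => p.1 ≠ p.2 ∧ ℓ ≤ p.1.val ∧ ℓ ≤ p.2.val)).image
        (fun p => s(R.c p.1, R.c p.2)) ∪
      ((Finset.univ : Finset (Fin R.m × Fin R.m)).filter
        (fun p => p.1 ≠ p.2 ∧ p.1.val < ℓ ∧ p.2.val < ℓ)).image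
        (fun p => s(R.d p.1, R.d p.2)) ∪
      ((Finset.univ : Finset (Fin R.m × Fin R.m)).filter
        (fun p => p.1 ≠ p.2 ∧ ℓ ≤ p.1.val ∧ ℓ ≤ p.2.val)).image
        (fun p => s(R.d p.1, R.d p.2)) ∪
      ((Finset.univ : Finset (Fin R.n × Fin R.m)).filter
        (fun p => p.1 ∈ X₁ ∧ ℓ ≤ p.2.val)).image
        (fun p => s(R.c p.1, R.d p.2)) ∪
      ((Finset.univ : Finset (Fin R.m × Fin R.n)).filter
        (fun p => p.1 ∈ X₂ ∧ p.2.val < ℓ)).image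
        (fun p => s(R.d p.1, R.c p.2))) :
    IsTriangleHitting G H := by
  classical
  -- adjacency transfer along the nested neighbourhoods
  have adjC : ∀ (i j : Fin R.n) (v : V), i.val ≤ j.val → G.Adj v (R.c j) → v ≠ R.c i →
      G.Adj v (R.c i) := by
    intro i j v hij hadj hne
    have hv : v ∈ (insert (R.c i) (G.neighborSet (R.c i)) : Set V) :=
      R.nested1_le i j hij (Set.mem_insert_iff.mpr (Or.inr hadj.symm))
    rcases Set.mem_insert_iff.mp hv with h | h
    · exact absurd h hne
    · exact h.symm
  have adjD : ∀ (i j : Fin R.m) (v : V), i.val ≤ j.val → G.Adj v (R.d i) → v ≠ R.d j →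
      G.Adj v (R.d j) := by
    intro i j v hij hadj hne
    have hv : v ∈ (insert (R.d j) (G.neighborSet (R.d j)) : Set V) :=
      R.nested2_le i j hij (Set.mem_insert_iff.mpr (Or.inr hadj.symm))
    rcases Set.mem_insert_iff.mp hv with h | h
    · exact absurd h hne
    · exact h.symm
  -- membership in X₁ / X₂
  have memX₁ : ∀ (i : Fin R.n) (k : Fin R.m), k.val < ℓ → G.Adj (R.c i) (R.d k) →
      i ∈ X₁ := by
    intro i k hk hadj
    rw [hX₁, Finset.mem_filter]
    refine ⟨Finset.mem_univ _, fun j hj => ?_⟩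
    by_cases h : R.d j = R.c i
    · exact Or.inl h
    · exact Or.inr (adjD k j (R.c i) (le_of_lt (lt_of_lt_of_le hk hj)) hadj
        (fun he => h he.symm))
  have memX₂ : ∀ (k : Fin R.m) (j : Fin R.n), ℓ ≤ j.val → G.Adj (R.d k) (R.c j) →
      k ∈ X₂ := by
    intro k j hj hadj
    rw [hX₂, Finset.mem_filter]
    refine ⟨Finset.mem_univ _, fun i hi => ?_⟩
    by_cases h : R.c i = R.d k
    · exact Or.inl h
    · exact Or.inr (adjC i j (R.d k) (le_of_lt (lt_of_lt_of_le hi hj)) hadj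
        (fun he => h he.symm))
  -- membership in H for the various edge types
  have hH1 : ∀ i j : Fin R.n, i ≠ j → i.val < ℓ → j.val < ℓ → s(R.c i, R.c j) ∈ H := by
    intro i j hij hi hj
    rw [hH]; simp only [Finset.mem_union]
    exact Or.inl (Or.inl (Or.inl (Or.inl (Or.inl (Finset.mem_image.mpr
      ⟨(i, j), Finset.mem_filter.mpr ⟨Finset.mem_univ _, hij, hi, hj⟩, rfl⟩)))))
  have hH2 : ∀ i j : Fin R.n, i ≠ j → ℓ ≤ i.val → ℓ ≤ j.val → s(R.c i, R.c j) ∈ H := by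
    intro i j hij hi hj
    rw [hH]; simp only [Finset.mem_union]
    exact Or.inl (Or.inl (Or.inl (Or.inl (Or.inr (Finset.mem_image.mpr
      ⟨(i, j), Finset.mem_filter.mpr ⟨Finset.mem_univ _, hij, hi, hj⟩, rfl⟩)))))
  have hH3 : ∀ i j : Fin R.m, i ≠ j → i.val < ℓ → j.val < ℓ → s(R.d i, R.d j) ∈ H := by
    intro i j hij hi hj
    rw [hH]; simp only [Finset.mem_union]
    exact Or.inl (Or.inl (Or.inl (Or.inr (Finset.mem_image.mpr
      ⟨(i, j), Finset.mem_filter.mpr ⟨Finset.mem_univ _, hij, hi, hj⟩, rfl⟩))))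
  have hH4 : ∀ i j : Fin R.m, i ≠ j → ℓ ≤ i.val → ℓ ≤ j.val → s(R.d i, R.d j) ∈ H := by
    intro i j hij hi hj
    rw [hH]; simp only [Finset.mem_union]
    exact Or.inl (Or.inl (Or.inr (Finset.mem_image.mpr
      ⟨(i, j), Finset.mem_filter.mpr ⟨Finset.mem_univ _, hij, hi, hj⟩, rfl⟩)))
  have hH5 : ∀ (i : Fin R.n) (j : Fin R.m), i ∈ X₁ → ℓ ≤ j.val → s(R.c i, R.d j) ∈ H := by
    intro i j hi hj
    rw [hH]; simp only [Finset.mem_union]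
    exact Or.inl (Or.inr (Finset.mem_image.mpr
      ⟨(i, j), Finset.mem_filter.mpr ⟨Finset.mem_univ _, hi, hj⟩, rfl⟩))
  have hH6 : ∀ (j : Fin R.m) (i : Fin R.n), j ∈ X₂ → i.val < ℓ → s(R.d j, R.c i) ∈ H := by
    intro j i hjX hi
    rw [hH]; simp only [Finset.mem_union]
    exact Or.inr (Finset.mem_image.mpr
      ⟨(j, i), Finset.mem_filter.mpr ⟨Finset.mem_univ _, hjX, hi⟩, rfl⟩)
  have sameC : ∀ i j : Fin R.n, i ≠ j → (i.val < ℓ ↔ j.val < ℓ) → s(R.c i, R.c j) ∈ H := by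
    intro i j hij hiff
    by_cases hi : i.val < ℓ
    · exact hH1 i j hij hi (hiff.mp hi)
    · exact hH2 i j hij (le_of_not_gt hi) (le_of_not_gt (fun h => hi (hiff.mpr h)))
  have sameD : ∀ i j : Fin R.m, i ≠ j → (i.val < ℓ ↔ j.val < ℓ) → s(R.d i, R.d j) ∈ H := by
    intro i j hij hiff
    by_cases hi : i.val < ℓ
    · exact hH3 i j hij hi (hiff.mp hi)
    · exact hH4 i j hij (le_of_not_gt hi) (le_of_not_gt (fun h => hi (hiff.mpr h)))
  -- case: two vertices in K₁, one in K₂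
  have case_cc : ∀ (i j : Fin R.n) (k : Fin R.m), i ≠ j →
      G.Adj (R.c i) (R.d k) → G.Adj (R.c j) (R.d k) →
      ∃ e ∈ H, ∀ v ∈ e, v = R.c i ∨ v = R.c j ∨ v = R.d k := by
    intro i j k hij hik hjk
    by_cases hiff : (i.val < ℓ ↔ j.val < ℓ)
    · exact ⟨s(R.c i, R.c j), sameC i j hij hiff, fun v hv => by
        rcases Sym2.mem_iff.mp hv with h | h
        · exact Or.inl h
        · exact Or.inr (Or.inl h)⟩
    · by_cases hi : i.val < ℓ
      · have hj : ℓ ≤ j.val := le_of_not_gt (fun h => hiff (iff_of_true hi h))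
        have hkX : k ∈ X₂ := memX₂ k j hj hjk.symm
        exact ⟨s(R.d k, R.c i), hH6 k i hkX hi, fun v hv => by
          rcases Sym2.mem_iff.mp hv with h | h
          · exact Or.inr (Or.inr h)
          · exact Or.inl h⟩
      · have hj : j.val < ℓ := by
          by_contra hj
          exact hiff (iff_of_false hi hj)
        have hkX : k ∈ X₂ := memX₂ k i (le_of_not_gt hi) hik.symm
        exact ⟨s(R.d k, R.c j), hH6 k j hkX hj, fun v hv => by
          rcases Sym2.mem_iff.mp hv with h | h
          · exact Or.inr (Or.inr h)
          · exact Or.inr (Or.inl h)⟩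
  -- case: two vertices in K₂, one in K₁
  have case_dd : ∀ (k k' : Fin R.m) (i : Fin R.n), k ≠ k' →
      G.Adj (R.c i) (R.d k) → G.Adj (R.c i) (R.d k') →
      ∃ e ∈ H, ∀ v ∈ e, v = R.d k ∨ v = R.d k' ∨ v = R.c i := by
    intro k k' i hkk' hik hik'
    by_cases hiff : (k.val < ℓ ↔ k'.val < ℓ)
    · exact ⟨s(R.d k, R.d k'), sameD k k' hkk' hiff, fun v hv => by
        rcases Sym2.mem_iff.mp hv with h | h
        · exact Or.inl h
        · exact Or.inr (Or.inl h)⟩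
    · by_cases hk : k.val < ℓ
      · have hk' : ℓ ≤ k'.val := le_of_not_gt (fun h => hiff (iff_of_true hk h))
        have hiX : i ∈ X₁ := memX₁ i k hk hik
        exact ⟨s(R.c i, R.d k'), hH5 i k' hiX hk', fun v hv => by
          rcases Sym2.mem_iff.mp hv with h | h
          · exact Or.inr (Or.inr h)
          · exact Or.inr (Or.inl h)⟩
      · have hk' : k'.val < ℓ := by
          by_contra hk'
          exact hiff (iff_of_false hk hk')
        have hiX : i ∈ X₁ := memX₁ i k' hk' hik'
        exact ⟨s(R.c i, R.d k), hH5 i k (hiX) (le_of_not_gt hk), fun v hv => by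
          rcases Sym2.mem_iff.mp hv with h | h
          · exact Or.inr (Or.inr h)
          · exact Or.inl h⟩
  -- case: all three vertices in K₁
  have case_ccc : ∀ i j k : Fin R.n, i ≠ j → i ≠ k → j ≠ k →
      ∃ e ∈ H, ∀ v ∈ e, v = R.c i ∨ v = R.c j ∨ v = R.c k := by
    intro i j k hij hik hjk
    by_cases h1 : (i.val < ℓ ↔ j.val < ℓ)
    · exact ⟨s(R.c i, R.c j), sameC i j hij h1, fun v hv => by
        rcases Sym2.mem_iff.mp hv with h | h
        · exact Or.inl h
        · exact Or.inr (Or.inl h)⟩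
    · by_cases h2 : (i.val < ℓ ↔ k.val < ℓ)
      · exact ⟨s(R.c i, R.c k), sameC i k hik h2, fun v hv => by
          rcases Sym2.mem_iff.mp hv with h | h
          · exact Or.inl h
          · exact Or.inr (Or.inr h)⟩
      · have h3 : (j.val < ℓ ↔ k.val < ℓ) := by tauto
        exact ⟨s(R.c j, R.c k), sameC j k hjk h3, fun v hv => by
          rcases Sym2.mem_iff.mp hv with h | h
          · exact Or.inr (Or.inl h)
          · exact Or.inr (Or.inr h)⟩
  -- case: all three vertices in K₂
  have case_ddd : ∀ i j k : Fin R.m, i ≠ j → i ≠ k → j ≠ k →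
      ∃ e ∈ H, ∀ v ∈ e, v = R.d i ∨ v = R.d j ∨ v = R.d k := by
    intro i j k hij hik hjk
    by_cases h1 : (i.val < ℓ ↔ j.val < ℓ)
    · exact ⟨s(R.d i, R.d j), sameD i j hij h1, fun v hv => by
        rcases Sym2.mem_iff.mp hv with h | h
        · exact Or.inl h
        · exact Or.inr (Or.inl h)⟩
    · by_cases h2 : (i.val < ℓ ↔ k.val < ℓ)
      · exact ⟨s(R.d i, R.d k), sameD i k hik h2, fun v hv => by
          rcases Sym2.mem_iff.mp hv with h | h
          · exact Or.inl h
          · exact Or.inr (Or.inr h)⟩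
      · have h3 : (j.val < ℓ ↔ k.val < ℓ) := by tauto
        exact ⟨s(R.d j, R.d k), sameD j k hjk h3, fun v hv => by
          rcases Sym2.mem_iff.mp hv with h | h
          · exact Or.inr (Or.inl h)
          · exact Or.inr (Or.inr h)⟩
  -- key lemma: any three pairwise adjacent vertices contain an edge of H
  have key : ∀ x y z : V, x ≠ y → x ≠ z → y ≠ z → G.Adj x y → G.Adj x z → G.Adj y z →
      ∃ e ∈ H, ∀ v ∈ e, v = x ∨ v = y ∨ v = z := by
    intro x y z hxy hxz hyz axy axz ayz
    rcases R.cover x with ⟨i, rfl⟩ | ⟨i, rfl⟩ <;>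
      rcases R.cover y with ⟨j, rfl⟩ | ⟨j, rfl⟩ <;>
      rcases R.cover z with ⟨k, rfl⟩ | ⟨k, rfl⟩
    · exact case_ccc i j k (fun h => hxy (congrArg R.c h)) (fun h => hxz (congrArg R.c h))
        (fun h => hyz (congrArg R.c h))
    · exact case_cc i j k (fun h => hxy (congrArg R.c h)) axz ayz
    · obtain ⟨e, he, hm⟩ := case_cc i k j (fun h => hxz (congrArg R.c h)) axy ayz.symm
      exact ⟨e, he, fun v hv => by rcases hm v hv with h | h | h <;> tauto⟩
    · obtain ⟨e, he, hm⟩ := case_dd j k i (fun h => hyz (congrArg R.d h)) axy axz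
      exact ⟨e, he, fun v hv => by rcases hm v hv with h | h | h <;> tauto⟩
    · obtain ⟨e, he, hm⟩ := case_cc j k i (fun h => hyz (congrArg R.c h)) axy.symm axz.symm
      exact ⟨e, he, fun v hv => by rcases hm v hv with h | h | h <;> tauto⟩
    · obtain ⟨e, he, hm⟩ := case_dd i k j (fun h => hxz (congrArg R.d h)) axy.symm ayz
      exact ⟨e, he, fun v hv => by rcases hm v hv with h | h | h <;> tauto⟩
    · obtain ⟨e, he, hm⟩ := case_dd i j k (fun h => hxy (congrArg R.d h)) axz.symm ayz.symm
      exact ⟨e, he, fun v hv => by rcases hm v hv with h | h | h <;> tauto⟩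
    · exact case_ddd i j k (fun h => hxy (congrArg R.d h)) (fun h => hxz (congrArg R.d h))
        (fun h => hyz (congrArg R.d h))
  constructor
  · -- H consists of edges of G
    rw [hH]
    intro e he
    simp only [Finset.mem_union, Finset.mem_image, Finset.mem_filter, Finset.mem_univ,
      true_and] at he
    rw [SimpleGraph.mem_edgeFinset]
    rcases he with (((((⟨p, hp, rfl⟩ | ⟨p, hp, rfl⟩) | ⟨p, hp, rfl⟩) | ⟨p, hp, rfl⟩) |
      ⟨p, hp, rfl⟩) | ⟨p, hp, rfl⟩)
    · exact (G.mem_edgeSet).mpr (R.clique1 p.1 p.2 hp.1)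
    · exact (G.mem_edgeSet).mpr (R.clique1 p.1 p.2 hp.1)
    · exact (G.mem_edgeSet).mpr (R.clique2 p.1 p.2 hp.1)
    · exact (G.mem_edgeSet).mpr (R.clique2 p.1 p.2 hp.1)
    · have h1 := hp.1
      rw [hX₁] at h1
      have h := (Finset.mem_filter.mp h1).2 p.2 hp.2
      rcases h with h | h
      · exact absurd h.symm (R.disj p.1 p.2)
      · exact (G.mem_edgeSet).mpr h
    · have h1 := hp.1
      rw [hX₂] at h1
      have h := (Finset.mem_filter.mp h1).2 p.2 hp.2
      rcases h with h | h
      · exact absurd h.symm (fun he' => R.disj p.2 p.1 he'.symm)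
      · exact (G.mem_edgeSet).mpr h
  · -- every triangle is hit
    rintro t ⟨hc3, hclq⟩
    obtain ⟨x, y, z, hxy, hxz, hyz, rfl⟩ := Finset.card_eq_three.mp hc3
    have hx : x ∈ (↑({x, y, z} : Finset V) : Set V) := by simp
    have hy : y ∈ (↑({x, y, z} : Finset V) : Set V) := by simp
    have hz : z ∈ (↑({x, y, z} : Finset V) : Set V) := by simp
    have axy : G.Adj x y := hclq hx hy hxy
    have axz : G.Adj x z := hclq hx hz hxz
    have ayz : G.Adj y z := hclq hy hz hyz
    obtain ⟨e, he, hm⟩ := key x y z hxy hxz hyz axy axz ayz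
    exact ⟨e, he, fun v hv => by rcases hm v hv with h | h | h <;> simp [h]⟩
end

section
/- Let ℓ ≥ 4 be even and let x_1, x_2 be integers with 0 ≤ x_2 ≤ x_1 < ℓ and x_1 even. Then 2·(2·binom(ℓ,2) + (ℓ/2)·x_1 + C + D) ≥ 4·binom(ℓ,2) + ℓx_1 + (ℓ − x_1)x_2, where C = x_1·floor((ℓ−x_1)/2) if x_1 ≤ ℓ−x_1 and C = (ℓ−x_1)·floor(x_1/2) otherwise, and D = x_2·floor((ℓ−x_1)/2) if x_2 < ℓ−x_1 and D = binom(ℓ−x_1,2) otherwise. -/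
open Finset

lemma double_choose_two (m : ℕ) : (m + m).choose 2 = m * (m + m - 1) := by
  rw [Nat.choose_two_right]
  rcases m with _ | m
  · rfl
  · rw [show (m+1) + (m+1) = 2*(m+1) by ring]
    rw [Nat.mul_assoc, Nat.mul_div_cancel_left _ (by norm_num : 0 < 2)]

/-- The key arithmetic inequality in the co-chain case `x₁, x₂ < ℓ` with `x₁` even. -/
theorem cochain_arith_small (ℓ x₁ x₂ : ℕ) (hl : 4 ≤ ℓ) (hleven : Even ℓ)
    (h1 : x₂ ≤ x₁) (h2 : x₁ < ℓ) (hx₁even : Even x₁) :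
    4 * ℓ.choose 2 + ℓ * x₁ + (ℓ - x₁) * x₂ ≤
      2 * (2 * ℓ.choose 2 + (ℓ / 2) * x₁ +
        (if x₁ ≤ ℓ - x₁ then x₁ * ((ℓ - x₁) / 2) else (ℓ - x₁) * (x₁ / 2)) +
        (if x₂ < ℓ - x₁ then x₂ * ((ℓ - x₁) / 2) else (ℓ - x₁).choose 2)) := by
  obtain ⟨a, ha⟩ := hleven
  obtain ⟨b, hb⟩ := hx₁even
  subst ha hb
  have hba : b ≤ a := by omega
  obtain ⟨cc, rfl⟩ : ∃ cc, a = b + cc := ⟨a - b, by omega⟩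
  have e1 : b + cc + (b + cc) - (b + b) = cc + cc := by omega
  have e2 : (b + cc + (b + cc)) / 2 = b + cc := by omega
  have e3 : (cc + cc) / 2 = cc := by omega
  have e4 : (b + b) / 2 = b := by omega
  have e5 := double_choose_two (b + cc)
  have e6 := double_choose_two cc
  rw [e1, e2, e3, e4, e5, e6]
  obtain ⟨d, rfl⟩ : ∃ d, cc = d + 1 := ⟨cc - 1, by omega⟩
  have f1 : b + (d + 1) + (b + (d + 1)) - 1 = 2 * b + 2 * d + 1 := by omega
  have f2 : d + 1 + (d + 1) - 1 = 2 * d + 1 := by omega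
  rw [f1, f2]
  have hif1 : (if b + b ≤ d + 1 + (d + 1) then (b + b) * (d + 1) else (d + 1 + (d + 1)) * b) = (b + b) * (d + 1) := by
    split
    · rfl
    · ring
  have k1 : x₂ * (d + 1) ≤ (b + b) * (d + 1) := Nat.mul_le_mul_right _ h1
  have hD : (d + 1 + (d + 1)) * x₂ ≤
      2 * (if x₂ < d + 1 + (d + 1) then x₂ * (d + 1) else (d + 1) * (2 * d + 1)) +
        2 * ((b + b) * (d + 1)) := by
    split
    · nlinarith [k1]
    · nlinarith [k1]
  rw [hif1]
  have hmul : (b + (d + 1) + (b + (d + 1))) * (b + b) = 2 * ((b + (d + 1)) * (b + b)) := by ring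
  linarith [hD, hmul]
end
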